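/- arXiv:0905.3776 — 8 statements merged into one kernel-verified Lean document; each statement's English description precedes it below -/
import Mathlib

section
/- Let $r \geq 1$ and let $x_1, \ldots, x_r \in \mathbb{C}$. Set $x_0 = x_{r+1} = 1$ and $x_i = 0$ for $i < 0$ or $i > r+1$. For each positive integer $m$ and each $i \in \{1, \ldots, r\}$ let $M^{mi}$ be the $m \times m$ Toeplitz matrix with entries $(M^{mi})_{kl} = x_{l-k+i}$, and define $z_{i,m} = \det M^{mi}$, with the conventions $z_{0,m} = z_{r+1,m} = 1$ for all $m \geq 0$ and $z_{i,0} = 1$ for all $i$. Then for all $i \in \{1,\ldots,r\}$ and all $m \geq 1$ one has the discrete Hirota equation $z_{i,m+1}\, z_{i,m-1} = z_{i,m}^2 - z_{i-1,m}\, z_{i+1,m}$. -/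
/-!
Each equation is the Desnanot–Jacobi identity for the Toeplitz matrix `T = M^{m+1,i}`: deleting
the first (or last) row and column of `T` gives `M^{m,i}`, deleting both gives `M^{m-1,i}`, and
deleting the first row and last column (or the last row and first column) shifts `i` by `±1`.

Desnanot–Jacobi is the `2 × 2` case of Jacobi's theorem on complementary minors of the adjugate.
Writing `M = [[A, B], [C, D]]` with `D` of size `k` and `[X; P]` for the last `k` columns of
`adjugate M`, the product `M * [[1, X], [0, P]] = [[A, 0], [C, det M • 1]]` gives
`det M * det P = det M ^ k * det A`, and `det M` cancels in the generic matrix of indeterminates.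
-/

namespace Matrix

variable {m n R : Type*} [Fintype m] [Fintype n] [DecidableEq m] [DecidableEq n] [CommRing R]

theorem det_mul_det_toBlocks₂₂_adjugate (M : Matrix (m ⊕ n) (m ⊕ n) R) :
    det M * det (adjugate M).toBlocks₂₂ = det M ^ Fintype.card n * det M.toBlocks₁₁ := by
  set X := (adjugate M).toBlocks₁₂
  set P := (adjugate M).toBlocks₂₂
  obtain ⟨-, hX, -, hP⟩ : _ ∧ M.toBlocks₁₁ * X + M.toBlocks₁₂ * P = 0 ∧ _ ∧
      M.toBlocks₂₁ * X + M.toBlocks₂₂ * P = det M • 1 := by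
    have h : fromBlocks M.toBlocks₁₁ M.toBlocks₁₂ M.toBlocks₂₁ M.toBlocks₂₂ *
        fromBlocks (adjugate M).toBlocks₁₁ X (adjugate M).toBlocks₂₁ P =
        det M • fromBlocks 1 0 0 1 := by
      rw [fromBlocks_toBlocks, fromBlocks_toBlocks, fromBlocks_one, mul_adjugate]
    rw [fromBlocks_multiply, fromBlocks_smul, fromBlocks_inj] at h
    simpa using h
  have hprod : M * fromBlocks 1 X 0 P = fromBlocks M.toBlocks₁₁ 0 M.toBlocks₂₁ (det M • 1) := by
    conv_lhs => rw [← fromBlocks_toBlocks M]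
    simp [fromBlocks_multiply, hX, hP]
  calc det M * det P = det (M * fromBlocks 1 X 0 P) := by
        rw [det_mul, det_fromBlocks_zero₂₁, det_one, one_mul]
    _ = det M ^ Fintype.card n * det M.toBlocks₁₁ := by
        rw [hprod, det_fromBlocks_zero₁₂, det_smul, det_one, mul_one, mul_comm]

theorem det_toBlocks₂₂_adjugate [Nonempty n] (M : Matrix (m ⊕ n) (m ⊕ n) R) :
    det (adjugate M).toBlocks₂₂ = det M ^ (Fintype.card n - 1) * det M.toBlocks₁₁ := by
  let A := mvPolynomialX (m ⊕ n) (m ⊕ n) ℤ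
  suffices det (adjugate A).toBlocks₂₂ = det A ^ (Fintype.card n - 1) * det A.toBlocks₁₁ by
    have h := congrArg (MvPolynomial.aeval fun p : (m ⊕ n) × (m ⊕ n) => M p.1 p.2) this
    rw [map_mul, map_pow, AlgHom.map_det, AlgHom.map_det, AlgHom.map_det] at h
    rw [← mvPolynomialX_mapMatrix_aeval ℤ M, ← AlgHom.map_adjugate]
    exact h
  apply mul_left_cancel₀ (det_mvPolynomialX_ne_zero (m ⊕ n) ℤ)
  rw [det_mul_det_toBlocks₂₂_adjugate, ← mul_assoc, ← pow_succ',
    Nat.sub_add_cancel Fintype.card_pos]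

noncomputable def finSumFinTwoEquivInnerCorners (n : ℕ) : Fin n ⊕ Fin 2 ≃ Fin (n + 2) :=
  Equiv.ofBijective (Sum.elim (Fin.succ ∘ Fin.castSucc) ![0, Fin.last (n + 1)]) <| by
    refine (Fintype.bijective_iff_injective_and_card _).2 ⟨?_, by simp⟩
    refine ((Fin.succ_injective _).comp (Fin.castSucc_injective _)).sumElim ?_ ?_
    · intro a b; fin_cases a <;> fin_cases b <;> simp [Fin.ext_iff]
    · intro a b; fin_cases b <;> simp [Fin.ext_iff]; omega

theorem desnanot_jacobi {n : ℕ} (M : Matrix (Fin (n + 2)) (Fin (n + 2)) R) :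
    det M * det (M.submatrix (Fin.succ ∘ Fin.castSucc) (Fin.succ ∘ Fin.castSucc)) =
      det (M.submatrix Fin.succ Fin.succ) * det (M.submatrix Fin.castSucc Fin.castSucc) -
        det (M.submatrix Fin.castSucc Fin.succ) * det (M.submatrix Fin.succ Fin.castSucc) := by
  set e := finSumFinTwoEquivInnerCorners n
  have hinner : (M.submatrix e e).toBlocks₁₁ =
      M.submatrix (Fin.succ ∘ Fin.castSucc) (Fin.succ ∘ Fin.castSucc) := rfl
  have h := det_toBlocks₂₂_adjugate (M.submatrix e e)
  rw [adjugate_submatrix_equiv_self, det_submatrix_equiv_self, hinner] at h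
  simp only [toBlocks₂₂, e, finSumFinTwoEquivInnerCorners, Equiv.coe_ofBijective, submatrix_apply,
    Sum.elim_inr, adjugate_fin_succ_eq_det_submatrix, det_fin_two, of_apply, cons_val_zero,
    cons_val_one, cons_val_fin_one, Fin.val_zero, Fin.val_last, ← two_mul, mul_zero, pow_zero,
    pow_mul, neg_one_sq, one_pow, one_mul, Fin.succAbove_zero, Fin.succAbove_last, add_zero,
    zero_add, Fintype.card_fin, Nat.add_one_sub_one, pow_one] at h
  rw [mul_mul_mul_comm, ← pow_add, Even.neg_one_pow ⟨_, rfl⟩, one_mul] at h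
  exact h.symm

variable {α : Type*}

def toeplitz (m : ℕ) (t : ℤ → α) : Matrix (Fin m) (Fin m) α :=
  of fun k l => t ((l : ℤ) - k)

theorem toeplitz_submatrix_castSucc_castSucc (m : ℕ) (t : ℤ → α) :
    (toeplitz (m + 1) t).submatrix Fin.castSucc Fin.castSucc = toeplitz m t := by
  ext k l
  simp [toeplitz]

theorem toeplitz_submatrix_succ_succ (m : ℕ) (t : ℤ → α) :
    (toeplitz (m + 1) t).submatrix Fin.succ Fin.succ = toeplitz m t := by
  ext k l
  simp [toeplitz]

theorem toeplitz_submatrix_castSucc_succ (m : ℕ) (t : ℤ → α) :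
    (toeplitz (m + 1) t).submatrix Fin.castSucc Fin.succ = toeplitz m fun j => t (j + 1) := by
  ext k l
  simp [toeplitz, sub_add_eq_add_sub]

theorem toeplitz_submatrix_succ_castSucc (m : ℕ) (t : ℤ → α) :
    (toeplitz (m + 1) t).submatrix Fin.succ Fin.castSucc = toeplitz m fun j => t (j - 1) := by
  ext k l
  simp [toeplitz, sub_add_eq_sub_sub]

theorem det_toeplitz_add_two_mul_det_toeplitz (m : ℕ) (t : ℤ → R) :
    det (toeplitz (m + 2) t) * det (toeplitz m t) = det (toeplitz (m + 1) t) ^ 2 -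
      det (toeplitz (m + 1) fun j => t (j - 1)) * det (toeplitz (m + 1) fun j => t (j + 1)) := by
  have h := desnanot_jacobi (toeplitz (m + 2) t)
  simp only [← submatrix_submatrix, toeplitz_submatrix_succ_succ,
    toeplitz_submatrix_castSucc_castSucc, toeplitz_submatrix_castSucc_succ,
    toeplitz_submatrix_succ_castSucc] at h
  rw [h]
  ring

end Matrix

theorem toeplitz_solves_hirota_A_general (r : ℕ) (x : ℤ → ℂ) :
    let z : ℕ → ℕ → ℂ := fun i m =>
      Matrix.det (Matrix.of fun k l : Fin m => x ((l : ℤ) - (k : ℤ) + (i : ℤ)))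
    ∀ i : ℕ, 1 ≤ i → i ≤ r → ∀ m : ℕ, 1 ≤ m →
      z i (m + 1) * z i (m - 1) = z i m ^ 2 - z (i - 1) m * z (i + 1) m := by
  intro z i hi _ m hm
  obtain ⟨m, rfl⟩ := Nat.exists_eq_add_of_le' hm
  have hz : ∀ a b : ℕ, z a b = (Matrix.toeplitz b fun j => x (j + a)).det := fun _ _ => rfl
  simp only [hz, Nat.add_sub_cancel]
  convert Matrix.det_toeplitz_add_two_mul_det_toeplitz m fun j => x (j + i) using 5 <;>
    funext j <;> congr 1 <;> push_cast [Nat.cast_sub hi] <;> ring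

/-- The Toeplitz determinants `z i m = det (x_{l-k+i})_{k,l=1..m}` built from
`x₀ = x_{r+1} = 1`, arbitrary `x₁, …, x_r` and `x_i = 0` otherwise, satisfy the
discrete Hirota equations of type `(A_r, A_ℕ)`. -/
theorem toeplitz_solves_hirota_A (r : ℕ) (hr : 1 ≤ r) (x : ℤ → ℂ)
    (hx0 : x 0 = 1) (hxr : x (r + 1) = 1)
    (hxout : ∀ j : ℤ, j < 0 ∨ j > r + 1 → x j = 0) :
    let z : ℕ → ℕ → ℂ := fun i m =>
      Matrix.det (Matrix.of fun k l : Fin m => x ((l : ℤ) - (k : ℤ) + (i : ℤ)))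
    ∀ i : ℕ, 1 ≤ i → i ≤ r → ∀ m : ℕ, 1 ≤ m →
      z i (m + 1) * z i (m - 1) = z i m ^ 2 - z (i - 1) m * z (i + 1) m :=
  toeplitz_solves_hirota_A_general r x
end

section
/- Let $r \geq 1$ and let $(z_{i,m})$ for $i \in \{0,\ldots,r+1\}$, $m \geq 0$ satisfy the discrete Hirota equations $z_{i,m+1} z_{i,m-1} = z_{i,m}^2 - z_{i-1,m} z_{i+1,m}$ for $1 \leq i \leq r$, $m \geq 1$, with $z_{0,m} = z_{r+1,m} = 1$, $z_{i,0} = 1$. Assume $z_{i,m} \neq 0$ for all $i, m$. Define $z_{1,0} = 1$ and $z_{1,k} = 0$ for $k < 0$. Then for all $i \in \{1,\ldots,r+1\}$ and $m \geq 1$, $z_{i,m}$ equals the determinant of the $i \times i$ matrix $M^i_m$ with entries $(M^i_m)_{kl} = z_{1,m-k+l}$. -/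
/-!
Write `D i m` for the `i × i` Toeplitz determinant `det (z₁,(m-k+l))`. By the Desnanot–Jacobi
identity (Dodgson condensation), the four corner minors of `D (i+2) m` are `D (i+1) m` (twice) and
`D (i+1) (m ± 1)`, and its central minor is `D i m`; so `D` satisfies the Hirota recursion. It also
has the boundary values of `z`: `D 0 m = 1`, `D 1 m = z₁,m`, and `D i 0 = 1` because that matrix is
unitriangular. As `z i m ≠ 0` the recursion determines row `i + 2` from rows `i` and `i + 1`, and
induction on `i` gives `z i m = D i m`. Desnanot–Jacobi itself comes from the Schur complement of
the central block, which is `2 × 2`.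
-/

open Matrix

namespace Hirota

theorem det_submatrix_mul_det_submatrix {R : Type*} [CommRing R] {m n : Type*} [Fintype m]
    [DecidableEq m] [Fintype n] [DecidableEq n] (M N : Matrix n n R) (e f : m ≃ n) :
    (M.submatrix e f).det * (N.submatrix f e).det = M.det * N.det := by
  have hM : M.submatrix e f = (M.submatrix e e).submatrix id (f.trans e.symm) := by
    ext; simp
  have hN : N.submatrix f e = (N.submatrix e e).submatrix (f.trans e.symm) id := by
    ext; simp
  rw [hM, hN, det_permute', det_permute, det_submatrix_equiv_self, det_submatrix_equiv_self]
  calc _ = ((Equiv.Perm.sign (f.trans e.symm) * Equiv.Perm.sign (f.trans e.symm) : ℤˣ) : R)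
          * (M.det * N.det) := by push_cast; ring
    _ = M.det * N.det := by rw [Int.units_mul_self]; simp

section DesnanotJacobi

variable {K : Type*} [Field K] {ι : Type*} [Fintype ι] [DecidableEq ι]

/-- The minor of `A` keeping the `ι`-rows and `ι`-columns, bordered by corner row `a` and
corner column `b`. -/
def borderedMinor (A : Matrix (Fin 2 ⊕ ι) (Fin 2 ⊕ ι) K) (a b : Fin 2) :
    Matrix (Fin 1 ⊕ ι) (Fin 1 ⊕ ι) K :=
  A.submatrix (Sum.map (fun _ => a) id) (Sum.map (fun _ => b) id)

/-- Desnanot–Jacobi: each bordered minor is `det S` times an entry of the Schur complement of the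
central block `S`. -/
theorem det_mul_det_toBlocks₂₂ (A : Matrix (Fin 2 ⊕ ι) (Fin 2 ⊕ ι) K)
    (hS : A.toBlocks₂₂.det ≠ 0) :
    A.det * A.toBlocks₂₂.det =
      (borderedMinor A 0 0).det * (borderedMinor A 1 1).det -
        (borderedMinor A 0 1).det * (borderedMinor A 1 0).det := by
  set S := A.toBlocks₂₂
  have : Invertible S := S.invertibleOfIsUnitDet (isUnit_iff_ne_zero.2 hS)
  set T := A.toBlocks₁₁ - A.toBlocks₁₂ * ⅟S * A.toBlocks₂₁
  have hA : A.det = S.det * T.det := by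
    conv_lhs => rw [← fromBlocks_toBlocks A]
    exact det_fromBlocks₂₂ _ _ _ _
  have hminor : ∀ a b, (borderedMinor A a b).det = S.det * T a b := by
    intro a b
    have : borderedMinor A a b = fromBlocks (of fun _ _ => A (.inl a) (.inl b))
        (of fun _ j => A (.inl a) (.inr j)) (of fun i _ => A (.inr i) (.inl b)) S := by
      ext (i | i) (j | j) <;> rfl
    rw [this, det_fromBlocks₂₂, det_fin_one]
    simp [T, Matrix.mul_apply, toBlocks₁₁, toBlocks₁₂, toBlocks₂₁]
  rw [hA, det_fin_two, hminor, hminor, hminor, hminor]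
  ring

noncomputable def finSumEquivHead (n : ℕ) : Fin 1 ⊕ Fin n ≃ Fin (n + 1) :=
  Equiv.ofBijective (Sum.elim (fun _ => 0) Fin.succ) <|
    (Fintype.bijective_iff_injective_and_card _).2 ⟨by
      rintro (a | a) (b | b) h <;> simp_all [Fin.ext_iff, Fin.fin_one_eq_zero], by simp [add_comm]⟩

noncomputable def finSumEquivLast (n : ℕ) : Fin 1 ⊕ Fin n ≃ Fin (n + 1) :=
  Equiv.ofBijective (Sum.elim (fun _ => Fin.last n) Fin.castSucc) <|
    (Fintype.bijective_iff_injective_and_card _).2 ⟨by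
      rintro (a | a) (b | b) h <;> simp_all [Fin.ext_iff, Fin.fin_one_eq_zero] <;> omega,
      by simp [add_comm]⟩

noncomputable def finSumEquivCorners (n : ℕ) : Fin 2 ⊕ Fin n ≃ Fin (n + 2) :=
  Equiv.ofBijective (Sum.elim ![0, Fin.last (n + 1)] (fun j => j.castSucc.succ)) <|
    (Fintype.bijective_iff_injective_and_card _).2 ⟨by
      rintro (a | a) (b | b) h
      · fin_cases a <;> fin_cases b <;> simp_all [Fin.ext_iff]
      · fin_cases a <;> simp_all [Fin.ext_iff]; omega
      · fin_cases b <;> simp_all [Fin.ext_iff]; omega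
      · simp_all [Fin.ext_iff],
      by simp [add_comm]⟩

theorem det_mul_det_submatrix_inner {n : ℕ} (A : Matrix (Fin (n + 2)) (Fin (n + 2)) K)
    (h : (A.submatrix (Fin.succ ∘ Fin.castSucc) (Fin.succ ∘ Fin.castSucc)).det ≠ 0) :
    A.det * (A.submatrix (Fin.succ ∘ Fin.castSucc) (Fin.succ ∘ Fin.castSucc)).det =
      (A.submatrix Fin.castSucc Fin.castSucc).det * (A.submatrix Fin.succ Fin.succ).det -
        (A.submatrix Fin.castSucc Fin.succ).det * (A.submatrix Fin.succ Fin.castSucc).det := by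
  set E := finSumEquivCorners n
  have hhead : E ∘ Sum.map (fun _ => 0) id = Fin.castSucc ∘ finSumEquivHead n := by
    funext i; rcases i with i | i <;> rfl
  have hlast : E ∘ Sum.map (fun _ => 1) id = Fin.succ ∘ finSumEquivLast n := by
    funext i; rcases i with i | i <;> rfl
  have hminor : ∀ a b, borderedMinor (A.submatrix E E) a b =
      A.submatrix (E ∘ Sum.map (fun _ => a) id) (E ∘ Sum.map (fun _ => b) id) := fun _ _ => rfl
  rw [← det_submatrix_equiv_self E A]
  refine (det_mul_det_toBlocks₂₂ (A.submatrix E E) h).trans ?_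
  simp only [hminor, hhead, hlast, ← submatrix_submatrix, det_submatrix_equiv_self,
    det_submatrix_mul_det_submatrix]

end DesnanotJacobi

section Toeplitz

variable {K : Type*} [Field K]

def toeplitz (w : ℤ → K) (m : ℤ) (n : ℕ) : Matrix (Fin n) (Fin n) K :=
  of fun k l => w (m - k + l)

theorem det_toeplitz_one (w : ℤ → K) (m : ℤ) : (toeplitz w m 1).det = w m := by
  simp [toeplitz]

theorem det_toeplitz_zero (w : ℤ → K) (h₀ : w 0 = 1) (hneg : ∀ k < 0, w k = 0) (n : ℕ) :
    (toeplitz w 0 n).det = 1 := by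
  have hupper : (toeplitz w 0 n).IsUpperTriangular := fun k l hlk => by
    simp only [toeplitz, of_apply]
    exact hneg _ (by have : (l : ℕ) < k := hlk; omega)
  rw [det_of_isUpperTriangular hupper]
  simp [toeplitz, h₀]

theorem det_toeplitz_condensation (w : ℤ → K) (m : ℤ) (n : ℕ)
    (h : (toeplitz w m n).det ≠ 0) :
    (toeplitz w m (n + 2)).det * (toeplitz w m n).det =
      (toeplitz w m (n + 1)).det ^ 2 -
        (toeplitz w (m + 1) (n + 1)).det * (toeplitz w (m - 1) (n + 1)).det := by
  have hinner : (toeplitz w m (n + 2)).submatrix (Fin.succ ∘ Fin.castSucc)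
      (Fin.succ ∘ Fin.castSucc) = toeplitz w m n := by
    ext; simp [toeplitz]; ring_nf
  have hfirst : (toeplitz w m (n + 2)).submatrix Fin.succ Fin.succ = toeplitz w m (n + 1) := by
    ext; simp [toeplitz]; ring_nf
  have hlast : (toeplitz w m (n + 2)).submatrix Fin.castSucc Fin.castSucc =
      toeplitz w m (n + 1) := by
    ext; simp [toeplitz]
  have hup : (toeplitz w m (n + 2)).submatrix Fin.castSucc Fin.succ =
      toeplitz w (m + 1) (n + 1) := by
    ext; simp [toeplitz]; ring_nf
  have hdown : (toeplitz w m (n + 2)).submatrix Fin.succ Fin.castSucc =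
      toeplitz w (m - 1) (n + 1) := by
    ext; simp [toeplitz]; ring_nf
  have := det_mul_det_submatrix_inner (toeplitz w m (n + 2)) (hinner ▸ h)
  rw [hinner, hfirst, hlast, hup, hdown] at this
  rw [this, sq]

theorem eq_det_toeplitz_of_hirota (r : ℕ) (z : ℕ → ℕ → K) (w : ℤ → K)
    (hb0 : ∀ m, z 0 m = 1) (hm0 : ∀ i, z i 0 = 1)
    (hhirota : ∀ i, 1 ≤ i → i ≤ r → ∀ m, 1 ≤ m →
      z i (m + 1) * z i (m - 1) = z i m ^ 2 - z (i - 1) m * z (i + 1) m)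
    (hnz : ∀ i m, z i m ≠ 0) (hw : ∀ m : ℕ, w m = z 1 m) (hneg : ∀ k < 0, w k = 0) :
    ∀ i ≤ r + 1, ∀ m : ℕ, z i m = (toeplitz w m i).det := by
  intro i
  induction i using Nat.strong_induction_on with
  | _ i ih =>
  intro hi m
  match i, m with
  | 0, m => simp [hb0]
  | 1, m => rw [det_toeplitz_one, hw]
  | n + 2, 0 => rw [hm0, Nat.cast_zero, det_toeplitz_zero w (by simpa [hm0] using hw 0) hneg]
  | n + 2, m + 1 =>
    have ih₀ := ih n (by omega) (by omega)
    have ih₁ := ih (n + 1) (by omega) (by omega)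
    have hcond := det_toeplitz_condensation w (m + 1 : ℕ) n (ih₀ (m + 1) ▸ hnz n (m + 1))
    have hrec := hhirota (n + 1) (by omega) (by omega) (m + 1) (by omega)
    simp only [Nat.add_sub_cancel] at hrec
    rw [show ((m + 1 : ℕ) : ℤ) + 1 = (m + 2 : ℕ) by push_cast; ring,
      show ((m + 1 : ℕ) : ℤ) - 1 = m by push_cast; ring, ← ih₀, ← ih₁, ← ih₁, ← ih₁] at hcond
    refine mul_right_cancel₀ (hnz n (m + 1)) ?_
    linear_combination hrec - hcond

end Toeplitz

end Hirota

open Hirota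

theorem hirota_A_determinant_formula_general (r : ℕ) (z : ℕ → ℕ → ℂ)
    (hb0 : ∀ m, z 0 m = 1)
    (hm0 : ∀ i, z i 0 = 1)
    (hhirota : ∀ i, 1 ≤ i → i ≤ r → ∀ m, 1 ≤ m →
      z i (m + 1) * z i (m - 1) = z i m ^ 2 - z (i - 1) m * z (i + 1) m)
    (hnz : ∀ i m, z i m ≠ 0) :
    let w : ℤ → ℂ := fun m => if m < 0 then 0 else z 1 m.toNat
    ∀ i : ℕ, 1 ≤ i → i ≤ r + 1 → ∀ m : ℕ, 1 ≤ m →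
      z i m = Matrix.det (Matrix.of fun k l : Fin i =>
        w ((m : ℤ) - (k : ℤ) + (l : ℤ))) := by
  intro w i _ hi m _
  exact eq_det_toeplitz_of_hirota r z w hb0 hm0 hhirota hnz (fun m => by simp [w])
    (fun k hk => by simp [w, hk]) i hi m

/-- For a nowhere-vanishing solution of the `(A_r, A_ℕ)` discrete Hirota equations,
every `z i m` is the determinant of the `i × i` matrix with entries `z₁,(m-k+l)`,
where the first row is extended by `z₁,0 = 1` and `z₁,k = 0` for `k < 0`. -/
theorem hirota_A_determinant_formula (r : ℕ) (hr : 1 ≤ r) (z : ℕ → ℕ → ℂ)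
    (hb0 : ∀ m, z 0 m = 1) (hbr : ∀ m, z (r + 1) m = 1)
    (hm0 : ∀ i, z i 0 = 1)
    (hhirota : ∀ i, 1 ≤ i → i ≤ r → ∀ m, 1 ≤ m →
      z i (m + 1) * z i (m - 1) = z i m ^ 2 - z (i - 1) m * z (i + 1) m)
    (hnz : ∀ i m, z i m ≠ 0) :
    let w : ℤ → ℂ := fun m => if m < 0 then 0 else z 1 m.toNat
    ∀ i : ℕ, 1 ≤ i → i ≤ r + 1 → ∀ m : ℕ, 1 ≤ m →
      z i m = Matrix.det (Matrix.of fun k l : Fin i =>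
        w ((m : ℤ) - (k : ℤ) + (l : ℤ))) :=
  hirota_A_determinant_formula_general r z hb0 hm0 hhirota hnz
end

section
/- Let $r \geq 1$ and $n \geq 1$, and let $g_1, \ldots, g_{r+1}$ be distinct nonzero complex numbers with $g_1 \cdots g_{r+1} = 1$ and $g_i^{r+n+2} = (-1)^r$ for all $i$. Define $z_{1,m} = \sum_{j=1}^{r+1} g_j^{m+r}/\prod_{k\neq j}(g_j - g_k)$ for $m \in \mathbb{Z}$. Then $z_{1,n+1} = 1$ and $z_{1,m} = 0$ for $m = n+2, n+3, \ldots, n+1+r$. -/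
open Finset Polynomial

-- coeff of basis at top degree
lemma basis_coeff_top {F : Type*} [Field F] {ι : Type*} [DecidableEq ι] {s : Finset ι}
    {v : ι → F} {i : ι} (hvs : Set.InjOn v s) (hi : i ∈ s) :
    (Lagrange.basis s v i).coeff (#s - 1) = ∏ j ∈ s.erase i, (v i - v j)⁻¹ := by
  have hne : ∀ j ∈ s.erase i, v i ≠ v j := by
    intro j hj
    rcases mem_erase.mp hj with ⟨hij, hjs⟩
    exact fun h => hij.symm (hvs hi hjs h)
  have h1 : (Lagrange.basis s v i).coeff (#s - 1) = (Lagrange.basis s v i).leadingCoeff := by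
    rw [Polynomial.leadingCoeff, Lagrange.natDegree_basis hvs hi]
  rw [h1, Lagrange.basis, Polynomial.leadingCoeff_prod]
  refine prod_congr rfl fun j hj => ?_
  rw [Lagrange.basisDivisor, leadingCoeff_mul, leadingCoeff_X_sub_C, mul_one, leadingCoeff_C]

lemma key_pow {r : ℕ} (g : Fin (r + 1) → ℂ) (hgdist : Function.Injective g)
    (d : ℕ) (hd : d ≤ r) :
    ∑ j, g j ^ d / ∏ k ∈ Finset.univ.erase j, (g j - g k)
      = if d = r then 1 else 0 := by
  have hinj : Set.InjOn g (univ : Finset (Fin (r+1))) := hgdist.injOn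
  have hcard : #(univ : Finset (Fin (r+1))) = r + 1 := by simp
  have hdeg : (X ^ d : ℂ[X]).degree < (#(univ : Finset (Fin (r+1))) : ℕ) := by
    rw [hcard, degree_X_pow]
    exact_mod_cast Nat.lt_succ_of_le hd
  have h := Lagrange.eq_interpolate (f := (X ^ d : ℂ[X])) hinj hdeg
  have h2 := congrArg (fun p => Polynomial.coeff p r) h
  simp only [Lagrange.interpolate_apply, Polynomial.finset_sum_coeff, Polynomial.coeff_C_mul,
    Polynomial.coeff_X_pow] at h2
  have h3 : ∀ j ∈ (univ : Finset (Fin (r+1))),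
      Polynomial.eval (g j) (X ^ d : ℂ[X]) * (Lagrange.basis univ g j).coeff r
        = g j ^ d / ∏ k ∈ Finset.univ.erase j, (g j - g k) := by
    intro j _
    have := basis_coeff_top (v := g) hinj (mem_univ j)
    rw [hcard] at this
    simp only [Nat.add_sub_cancel] at this
    rw [this, eval_pow, eval_X, div_eq_mul_inv, ← prod_inv_distrib]
  rw [Finset.sum_congr rfl h3] at h2
  rw [← h2]
  simp [eq_comm]

lemma key_inv {r : ℕ} (g : Fin (r + 1) → ℂ) (hg0 : ∀ i, g i ≠ 0)
    (hgdist : Function.Injective g) (hgprod : ∏ i, g i = 1) :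
    ∑ j, (g j)⁻¹ / ∏ k ∈ Finset.univ.erase j, (g j - g k) = (-1) ^ r := by
  have hinj : Set.InjOn g (univ : Finset (Fin (r+1))) := hgdist.injOn
  have h := Lagrange.sum_basis hinj univ_nonempty
  have h2 := congrArg (Polynomial.eval (0 : ℂ)) h
  simp only [eval_finset_sum, eval_one] at h2
  have h3 : ∀ j ∈ (univ : Finset (Fin (r+1))),
      Polynomial.eval (0 : ℂ) (Lagrange.basis univ g j)
        = (-1) ^ r * ((g j)⁻¹ / ∏ k ∈ Finset.univ.erase j, (g j - g k)) := by
    intro j _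
    rw [Lagrange.basis, eval_prod]
    have hcard : #((univ : Finset (Fin (r+1))).erase j) = r := by
      rw [card_erase_of_mem (mem_univ j)]; simp
    have hstep : ∀ k ∈ (univ : Finset (Fin (r+1))).erase j,
        Polynomial.eval (0:ℂ) (Lagrange.basisDivisor (g j) (g k))
          = (-1) * (g k * (g j - g k)⁻¹) := by
      intro k _
      simp only [Lagrange.basisDivisor, eval_mul, eval_C, eval_sub, eval_X]
      ring
    have hprod : ∏ k ∈ (univ : Finset (Fin (r+1))).erase j, g k = (g j)⁻¹ := by
      have h1 := Finset.mul_prod_erase univ g (mem_univ j)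
      rw [hgprod] at h1
      exact eq_inv_of_mul_eq_one_left (by rw [mul_comm]; exact h1)
    rw [prod_congr rfl hstep, prod_mul_distrib, prod_const, hcard, prod_mul_distrib, hprod,
      Finset.prod_inv_distrib]
    ring
  rw [Finset.sum_congr rfl h3, ← mul_sum] at h2
  have hpm : ((-1:ℂ)) ^ r * ((-1:ℂ)) ^ r = 1 := by
    rw [← pow_add]; exact Even.neg_one_pow ⟨r, rfl⟩
  calc ∑ j, (g j)⁻¹ / ∏ k ∈ Finset.univ.erase j, (g j - g k)
      = ((-1:ℂ))^r * (((-1:ℂ))^r * ∑ j, (g j)⁻¹ / ∏ k ∈ Finset.univ.erase j, (g j - g k)) := by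
        rw [← mul_assoc, hpm, one_mul]
    _ = (-1)^r := by rw [h2, mul_one]

/-- If the distinct nonzero `g_i` satisfy `∏ g_i = 1` and `g_i^{r+n+2} = (-1)^r`,
then the sequence `z₁,m = ∑_j g_j^{m+r}/∏_{k≠j}(g_j - g_k)` satisfies
`z₁,(n+1) = 1` and `z₁,m = 0` for `m = n+2, …, n+1+r`. -/
theorem finite_hirota_A_boundary (r n : ℕ) (hr : 1 ≤ r) (hn : 1 ≤ n)
    (g : Fin (r + 1) → ℂ) (hg0 : ∀ i, g i ≠ 0) (hgdist : Function.Injective g)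
    (hgprod : ∏ i, g i = 1)
    (hgpow : ∀ i, g i ^ ((r : ℤ) + n + 2) = (-1) ^ r) :
    let z1 : ℤ → ℂ := fun m =>
      ∑ j, g j ^ (m + r) / ∏ k ∈ Finset.univ.erase j, (g j - g k)
    z1 ((n : ℤ) + 1) = 1 ∧
      ∀ m : ℤ, (n : ℤ) + 2 ≤ m → m ≤ (n : ℤ) + 1 + r → z1 m = 0 := by
  intro z1
  constructor
  · show ∑ j, g j ^ (((n:ℤ)+1) + r) / ∏ k ∈ Finset.univ.erase j, (g j - g k) = 1
    have he : ∀ j : Fin (r+1), g j ^ (((n:ℤ)+1) + r) = (-1)^r * (g j)⁻¹ := by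
      intro j
      have hE : (((n:ℤ)+1) + r) = ((r:ℤ)+n+2) + (-1) := by ring
      rw [hE, zpow_add₀ (hg0 j), hgpow j, zpow_neg_one]
    simp only [he, mul_div_assoc]
    rw [← Finset.mul_sum, key_inv g hg0 hgdist hgprod, ← pow_add]
    exact Even.neg_one_pow ⟨r, rfl⟩
  · intro m hm1 hm2
    set d : ℕ := (m - n - 2).toNat with hd
    have hdle : (d:ℤ) = m - n - 2 := Int.toNat_of_nonneg (by omega)
    have hdr : d < r := by omega
    show ∑ j, g j ^ (m + r) / ∏ k ∈ Finset.univ.erase j, (g j - g k) = 0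
    have he : ∀ j : Fin (r+1), g j ^ (m + (r:ℤ)) = (-1)^r * g j ^ d := by
      intro j
      have hE : m + (r:ℤ) = ((r:ℤ)+n+2) + d := by omega
      rw [hE, zpow_add₀ (hg0 j), hgpow j, zpow_natCast]
    simp only [he, mul_div_assoc]
    rw [← Finset.mul_sum, key_pow g hgdist d (le_of_lt hdr)]
    simp [Nat.ne_of_lt hdr]
end

section
/- Let $r, n \geq 1$ and suppose the sequence $(z_{1,m})_{m \in \mathbb{Z}}$ satisfies a linear recursion $\sum_{k=0}^{r+1} (-1)^k x_k z_{1,m+k} = 0$ for all $m \in \mathbb{Z}$, with $x_0 = x_{r+1} = 1$, and satisfies $z_{1,0} = 1$, $z_{1,-m} = 0$ for $m = 1, \ldots, r$, $z_{1,n+1} = 1$, and $z_{1,m} = 0$ for $m = n+2, \ldots, n+1+r$. Then $z_{1,m+n+r+2} = (-1)^r z_{1,m}$ for all $m \in \mathbb{Z}$, i.e., the sequence is quasi-periodic with period $n+r+2$ up to sign $(-1)^r$. -/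
/-- Quasi-periodicity of the first row of `S(A_r, A_n)`: under the linear recursion
with `x₀ = x_{r+1} = 1` and the stated boundary values, the sequence satisfies
`z₁,(m+n+r+2) = (-1)^r z₁,m`. -/
theorem hirota_A_quasi_periodicity (r n : ℕ) (hr : 1 ≤ r) (hn : 1 ≤ n)
    (x : ℕ → ℂ) (hx0 : x 0 = 1) (hxr : x (r + 1) = 1)
    (z : ℤ → ℂ)
    (hrec : ∀ m : ℤ, ∑ k ∈ Finset.range (r + 2), (-1) ^ k * x k * z (m + k) = 0)
    (hz0 : z 0 = 1)
    (hzneg : ∀ m : ℕ, 1 ≤ m → m ≤ r → z (-(m : ℤ)) = 0)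
    (hzn1 : z ((n : ℤ) + 1) = 1)
    (hzvan : ∀ m : ℤ, (n : ℤ) + 2 ≤ m → m ≤ (n : ℤ) + 1 + r → z m = 0) :
    ∀ m : ℤ, z (m + n + r + 2) = (-1) ^ r * z m := by
  have hsq : ((-1 : ℂ)) ^ r * (-1) ^ r = 1 := by
    rw [← pow_add, ← two_mul, pow_mul]; norm_num
  -- value at n + r + 2
  have hzP : z ((n : ℤ) + r + 2) = (-1) ^ r := by
    have h := hrec ((n : ℤ) + 1)
    rw [Finset.sum_range_succ', Finset.sum_range_succ] at h
    have hmid : ∀ k ∈ Finset.range r,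
        (-1 : ℂ) ^ (k + 1) * x (k + 1) * z ((n : ℤ) + 1 + ((k + 1 : ℕ) : ℤ)) = 0 := by
      intro k hk
      have hk' := Finset.mem_range.mp hk
      rw [hzvan ((n : ℤ) + 1 + ((k + 1 : ℕ) : ℤ)) (by push_cast; omega)
        (by push_cast; omega), mul_zero]
    rw [Finset.sum_eq_zero hmid] at h
    have e : (n : ℤ) + 1 + ((r + 1 : ℕ) : ℤ) = (n : ℤ) + r + 2 := by push_cast; ring
    rw [e, hxr] at h
    simp only [pow_zero, hx0, Nat.cast_zero, add_zero, hzn1, mul_one, one_mul, zero_add] at h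
    linear_combination (-(-1 : ℂ) ^ r) * h + (-(z ((n : ℤ) + r + 2))) * hsq
  -- uniqueness of solutions of the recursion given r+1 consecutive values
  have key : ∀ h : ℤ → ℂ,
      (∀ m : ℤ, ∑ k ∈ Finset.range (r + 2), (-1) ^ k * x k * h (m + k) = 0) →
      (∀ m : ℤ, -(r : ℤ) ≤ m → m ≤ 0 → h m = 0) → ∀ m, h m = 0 := by
    intro h hhrec hbase
    have main : ∀ N : ℕ, ∀ m : ℤ, -(r : ℤ) - N ≤ m → m ≤ N → h m = 0 := by
      intro N
      induction N with
      | zero => intro m h1 h2; exact hbase m (by omega) (by omega)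
      | succ N ih =>
        intro m h1 h2
        by_cases hc1 : m ≤ N
        · by_cases hc2 : -(r : ℤ) - N ≤ m
          · exact ih m hc2 hc1
          · -- m = -(r:ℤ) - N - 1, go backward
            have hr' := hhrec m
            rw [Finset.sum_range_succ'] at hr'
            have hmid : ∀ k ∈ Finset.range (r + 1),
                (-1 : ℂ) ^ (k + 1) * x (k + 1) * h (m + ((k + 1 : ℕ) : ℤ)) = 0 := by
              intro k hk
              have hk' := Finset.mem_range.mp hk
              rw [ih (m + ((k + 1 : ℕ) : ℤ)) (by push_cast; omega) (by push_cast; omega),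
                mul_zero]
            rw [Finset.sum_eq_zero hmid] at hr'
            simpa [hx0] using hr'
        · -- m = N + 1, go forward
          have hr' := hhrec (m - ((r : ℤ) + 1))
          rw [Finset.sum_range_succ] at hr'
          have hmid : ∀ k ∈ Finset.range (r + 1),
              (-1 : ℂ) ^ k * x k * h (m - ((r : ℤ) + 1) + (k : ℤ)) = 0 := by
            intro k hk
            have hk' := Finset.mem_range.mp hk
            rw [ih (m - ((r : ℤ) + 1) + (k : ℤ)) (by push_cast; omega) (by push_cast; omega),
              mul_zero]
          rw [Finset.sum_eq_zero hmid] at hr'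
          have e : m - ((r : ℤ) + 1) + ((r + 1 : ℕ) : ℤ) = m := by push_cast; ring
          rw [e, hxr, mul_one, zero_add] at hr'
          have hne : ((-1 : ℂ)) ^ (r + 1) ≠ 0 := pow_ne_zero _ (by norm_num)
          exact (mul_eq_zero.mp hr').resolve_left hne
    intro m
    exact main (m.natAbs + r) m (by omega) (by omega)
  -- apply to the difference
  have hHrec : ∀ m : ℤ, ∑ k ∈ Finset.range (r + 2),
      (-1) ^ k * x k * (z ((m + k) + n + r + 2) - (-1) ^ r * z (m + k)) = 0 := by
    intro m
    have h1 := hrec (m + n + r + 2)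
    have h2 := hrec m
    have e : ∀ k ∈ Finset.range (r + 2),
        (-1 : ℂ) ^ k * x k * (z ((m + k) + n + r + 2) - (-1) ^ r * z (m + k))
          = (-1) ^ k * x k * z (m + n + r + 2 + k)
            - (-1) ^ r * ((-1) ^ k * x k * z (m + k)) := by
      intro k _
      have e2 : (m + (k : ℤ)) + n + r + 2 = m + n + r + 2 + k := by ring
      rw [e2]; ring
    rw [Finset.sum_congr rfl e, Finset.sum_sub_distrib, ← Finset.mul_sum, h1, h2,
      mul_zero, sub_zero]
  have hbase : ∀ m : ℤ, -(r : ℤ) ≤ m → m ≤ 0 →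
      z (m + n + r + 2) - (-1) ^ r * z m = 0 := by
    intro m h1 h2
    rcases eq_or_lt_of_le h2 with h0 | h0
    · subst h0
      have e : (0 : ℤ) + n + r + 2 = (n : ℤ) + r + 2 := by ring
      rw [e, hzP, hz0, mul_one, sub_self]
    · obtain ⟨m', rfl⟩ : ∃ m' : ℕ, m = -(m' : ℤ) := ⟨(-m).toNat, by omega⟩
      rw [hzneg m' (by omega) (by omega), mul_zero, sub_zero]
      exact hzvan _ (by omega) (by omega)
  intro m
  have := key (fun m => z (m + n + r + 2) - (-1) ^ r * z m) hHrec hbase m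
  simpa [sub_eq_zero] using this
end

section
/- Let $g_1, \ldots, g_{r+1}$ be nonzero complex numbers (not necessarily distinct) and define $z_{1,m}$ as the solution of the linear recursion $\sum_{k=0}^{r+1}(-1)^k x_k z_{1,m+k} = 0$ (where $\prod_i(\gamma - g_i) = \sum_k (-1)^k x_{r+1-k}\gamma^k$) with $z_{1,0}=1$, $z_{1,-m}=0$ for $m=1,\ldots,r$. If the sequence $(z_{1,m})_{m\in\mathbb{Z}}$ is periodic (there exists $p \geq 1$ with $z_{1,m+p} = z_{1,m}$ for all $m$), then all $g_i$ are distinct roots of unity. -/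
/-!
Polynomials act on two-sided sequences through the backward shift. The characteristic
polynomial `∏ (X - g i)` annihilates `z` by the recursion and `X ^ p - 1` annihilates it by
periodicity, hence so does the remainder of `X ^ p - 1` modulo `∏ (X - g i)`. That remainder has
degree at most `r`, and the initial conditions `z 0 = 1`, `z (-1) = ⋯ = z (-r) = 0` leave no
nonzero annihilator of such small degree. So `∏ (X - g i)` divides `X ^ p - 1`, whose roots are
the `p` distinct `p`-th roots of unity.
-/

open Polynomial Finset

/-- `aeval (backwardShift R) q` sends `z` to `m ↦ ∑ qₖ z (m - k)`. -/
abbrev backwardShift (R : Type*) [CommRing R] : Module.End R (ℤ → R) :=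
  LinearMap.funLeft R R (· - 1)

section BackwardShift

variable {R : Type*} [CommRing R]

theorem backwardShift_pow_apply (n : ℕ) (z : ℤ → R) (m : ℤ) :
    (backwardShift R ^ n) z m = z (m - n) := by
  induction n generalizing m with
  | zero => simp
  | succ n ih =>
    rw [pow_succ', Module.End.mul_apply, LinearMap.funLeft_apply, ih]
    congr 1
    push_cast
    ring

theorem aeval_backwardShift_sum_C_mul_X_pow_apply (s : Finset ℕ) (c : ℕ → R) (z : ℤ → R)
    (m : ℤ) : aeval (backwardShift R) (∑ k ∈ s, C (c k) * X ^ k) z m =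
      ∑ k ∈ s, c k * z (m - k) := by
  simp [map_sum, LinearMap.sum_apply, Finset.sum_apply, backwardShift_pow_apply]

theorem aeval_modByMonic_apply_eq_zero {M : Type*} [AddCommGroup M] [Module R M]
    {S : Module.End R M} {v : M} {q P : R[X]}
    (hq : aeval S q v = 0) (hP : aeval S P v = 0) : aeval S (q %ₘ P) v = 0 := by
  rw [modByMonic_eq_sub_mul_div q P, mul_comm, map_sub, map_mul, LinearMap.sub_apply,
    Module.End.mul_apply, hP, map_zero, hq, sub_zero]

theorem eq_zero_of_aeval_backwardShift_eq_zero {r : ℕ} {z : ℤ → R} (hz0 : z 0 = 1)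
    (hzneg : ∀ m : ℕ, 1 ≤ m → m ≤ r → z (-(m : ℤ)) = 0) {q : R[X]} (hdeg : q.natDegree ≤ r)
    (hq : aeval (backwardShift R) q z = 0) : q = 0 := by
  by_contra hq0
  set t := q.natTrailingDegree
  -- At `m = t` only the trailing coefficient survives: lower coefficients vanish and higher
  -- ones meet `z` at `-r, …, -1`.
  have ht := congrFun hq t
  rw [q.as_sum_range_C_mul_X_pow, aeval_backwardShift_sum_C_mul_X_pow_apply,
    Finset.sum_eq_single t, sub_self, hz0, mul_one] at ht
  · exact trailingCoeff_nonzero_iff_nonzero.mpr hq0 ht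
  · intro k hk hkt
    rcases lt_or_gt_of_ne hkt with hlt | hgt
    · rw [coeff_eq_zero_of_lt_natTrailingDegree hlt, zero_mul]
    · have hkq : k ≤ q.natDegree := Nat.lt_succ_iff.1 (mem_range.1 hk)
      rw [show (t : ℤ) - k = -((k - t : ℕ) : ℤ) by omega, hzneg _ (by omega) (by omega),
        mul_zero]
  · intro ht'
    exact absurd (mem_range.2 (Nat.lt_succ_of_le (natTrailingDegree_le_natDegree q))) ht'

theorem dvd_of_aeval_backwardShift_eq_zero {r : ℕ} {z : ℤ → R} (hz0 : z 0 = 1)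
    (hzneg : ∀ m : ℕ, 1 ≤ m → m ≤ r → z (-(m : ℤ)) = 0) {P q : R[X]} (hP : P.Monic)
    (hPdeg : P.natDegree ≤ r + 1) (hPz : aeval (backwardShift R) P z = 0)
    (hqz : aeval (backwardShift R) q z = 0) : P ∣ q := by
  rw [← modByMonic_eq_zero_iff_dvd hP]
  refine eq_zero_of_aeval_backwardShift_eq_zero hz0 hzneg ?_
    (aeval_modByMonic_apply_eq_zero hqz hPz)
  rcases eq_or_ne P 1 with rfl | hP1
  · simp
  · have := natDegree_modByMonic_lt q hP hP1
    omega

theorem aeval_backwardShift_X_pow_sub_C_one {z : ℤ → R} {p : ℕ}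
    (hper : ∀ m : ℤ, z (m + p) = z m) : aeval (backwardShift R) (X ^ p - C (1 : R)) z = 0 := by
  ext m
  have := hper (m - p)
  simp_all [backwardShift_pow_apply]

theorem sum_range_reflect_mul_sub_eq_zero {n : ℕ} {c : ℕ → R} {z : ℤ → R}
    (hrec : ∀ m : ℤ, ∑ k ∈ range n, c k * z (m + k) = 0) (m : ℤ) :
    ∑ k ∈ range n, c (n - 1 - k) * z (m - k) = 0 := by
  rw [← hrec (m - (n - 1)), ← sum_range_reflect]
  refine sum_congr rfl fun k hk => ?_
  have : k < n := mem_range.1 hk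
  congr 2 <;> omega

theorem aeval_backwardShift_alternating_eq_zero {n : ℕ} {a z : ℤ → R}
    (hrec : ∀ m : ℤ, ∑ k ∈ range (n + 1), (-1) ^ k * a k * z (m + k) = 0) :
    aeval (backwardShift R) (∑ k ∈ range (n + 1), C ((-1) ^ k * a (n - k)) * X ^ k) z = 0 := by
  ext m
  have hrefl := sum_range_reflect_mul_sub_eq_zero (c := fun k => (-1) ^ k * a k) hrec m
  rw [aeval_backwardShift_sum_C_mul_X_pow_apply, Pi.zero_apply, ← mul_zero ((-1 : R) ^ n),
    ← hrefl, mul_sum]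
  refine sum_congr rfl fun k hk => ?_
  have hkn : k ≤ n := Nat.lt_succ_iff.1 (mem_range.1 hk)
  have hsign : (-1 : R) ^ n * (-1) ^ (n - k) = (-1) ^ k := by
    rw [← pow_add, show n + (n - k) = k + 2 * (n - k) by omega, pow_add, pow_mul]
    simp
  rw [Nat.add_sub_cancel, Nat.cast_sub hkn, ← hsign]
  ring

end BackwardShift

theorem Polynomial.map_univ_le_roots_of_prod_X_sub_C_dvd {R ι : Type*} [CommRing R]
    [IsDomain R] [Fintype ι] {g : ι → R} {q : R[X]} (hq : q ≠ 0)
    (h : ∏ i, (X - C (g i)) ∣ q) : univ.val.map g ≤ q.roots := by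
  rw [← Multiset.prod_X_sub_C_dvd_iff_le_roots hq, Multiset.map_map]
  exact h

theorem periodic_recursion_roots_of_unity_general (r : ℕ)
    (g : Fin (r + 1) → ℂ)
    (x : ℤ → ℂ)
    (hx : ∀ γ : ℂ, ∏ i, (γ - g i) =
      ∑ k ∈ Finset.range (r + 2), (-1) ^ k * x ((r : ℤ) + 1 - k) * γ ^ k)
    (z : ℤ → ℂ)
    (hrec : ∀ m : ℤ, ∑ k ∈ Finset.range (r + 2), (-1) ^ k * x k * z (m + k) = 0)
    (hz0 : z 0 = 1)
    (hzneg : ∀ m : ℕ, 1 ≤ m → m ≤ r → z (-(m : ℤ)) = 0)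
    (hper : ∃ p : ℕ, 1 ≤ p ∧ ∀ m : ℤ, z (m + p) = z m) :
    Function.Injective g ∧ ∀ i, ∃ k : ℕ, 1 ≤ k ∧ g i ^ k = 1 := by
  obtain ⟨p, hp, hper⟩ := hper
  have hP : ∏ i, (X - C (g i)) =
      ∑ k ∈ range (r + 2), C ((-1) ^ k * x ((r + 1 : ℕ) - k)) * X ^ k :=
    Polynomial.funext fun γ => by simpa [eval_prod, eval_finsetSum] using hx γ
  have hdvd : ∏ i, (X - C (g i)) ∣ X ^ p - C 1 :=
    dvd_of_aeval_backwardShift_eq_zero hz0 hzneg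
      (monic_prod_of_monic _ _ fun i _ => monic_X_sub_C _)
      (by simp [natDegree_prod _ _ fun i _ => X_sub_C_ne_zero (g i)])
      (hP ▸ aeval_backwardShift_alternating_eq_zero hrec)
      (aeval_backwardShift_X_pow_sub_C_one hper)
  have hle : univ.val.map g ≤ nthRoots p (1 : ℂ) :=
    map_univ_le_roots_of_prod_X_sub_C_dvd (X_pow_sub_C_ne_zero hp 1) hdvd
  refine ⟨?_, fun i => ⟨p, hp, (mem_nthRoots hp).1 (Multiset.mem_of_le hle
    (Multiset.mem_map_of_mem g (mem_univ_val i)))⟩⟩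
  exact Fintype.nodup_map_univ_iff_injective.1 <|
    Multiset.nodup_of_le hle (Complex.isPrimitiveRoot_exp p (by omega)).nthRoots_one_nodup

/-- If the solution of the linear recursion with characteristic polynomial
`∏ (γ - g_i)` and initial values `z 0 = 1`, `z (-m) = 0` (`m = 1, …, r`) is
periodic, then the `g_i` are distinct roots of unity. -/
theorem periodic_recursion_roots_of_unity (r : ℕ) (hr : 1 ≤ r)
    (g : Fin (r + 1) → ℂ) (hg0 : ∀ i, g i ≠ 0)
    (x : ℤ → ℂ)
    (hx : ∀ γ : ℂ, ∏ i, (γ - g i) =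
      ∑ k ∈ Finset.range (r + 2), (-1) ^ k * x ((r : ℤ) + 1 - k) * γ ^ k)
    (z : ℤ → ℂ)
    (hrec : ∀ m : ℤ, ∑ k ∈ Finset.range (r + 2), (-1) ^ k * x k * z (m + k) = 0)
    (hz0 : z 0 = 1)
    (hzneg : ∀ m : ℕ, 1 ≤ m → m ≤ r → z (-(m : ℤ)) = 0)
    (hper : ∃ p : ℕ, 1 ≤ p ∧ ∀ m : ℤ, z (m + p) = z m) :
    Function.Injective g ∧ ∀ i, ∃ k : ℕ, 1 ≤ k ∧ g i ^ k = 1 :=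
  periodic_recursion_roots_of_unity_general r g x hx z hrec hz0 hzneg hper
end

section
/- Let $r \geq 1$ and let $A$ be a real symmetric positive definite $r \times r$ matrix. Then the system of equations $\prod_{j=1}^r x_j^{A_{ij}} = 1 - x_i$ for $i = 1, \ldots, r$ has exactly one solution $x = (x_1, \ldots, x_r)$ with all $x_i \in (0,1)$. -/
/-!
Put `x = exp ∘ t` with `t ∈ (-∞, 0)ʳ`: the system becomes `A t = h ∘ t`, where
`h s = log (1 - eˢ)` is decreasing. Two solutions `t, t'` then satisfy
`⟪t - t', A (t - t')⟫ = ∑ᵢ (tᵢ - t'ᵢ) (h tᵢ - h t'ᵢ) ≤ 0`, so `t = t'`.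
For existence, the system says that `t` is a critical point of the energy
`E t = ⟪t, A t⟫ / 2 - ∑ᵢ g tᵢ` with `g' = h`. As `g` is bounded above, `E` is coercive and
attains its minimum on a large box `[-M, b]ʳ`; as `h → -∞` at `0⁻`, for `b` near `0` the
partial derivatives of `E` are positive on the faces `tᵢ = b`, so the minimum is interior.
-/

open Real Set Matrix Filter Topology Function

lemma Matrix.PosDef.exists_pos_mul_sq_norm_le {ι : Type*} [Fintype ι] {A : Matrix ι ι ℝ}
    (hA : A.PosDef) : ∃ c > 0, ∀ x : ι → ℝ, c * ‖x‖ ^ 2 ≤ x ⬝ᵥ A *ᵥ x := by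
  rcases subsingleton_or_nontrivial (ι → ℝ) with h | h
  · exact ⟨1, one_pos, fun x => by simp [Subsingleton.elim x 0]⟩
  have hcont : Continuous fun x : ι → ℝ => x ⬝ᵥ A *ᵥ x := by fun_prop
  obtain ⟨u, hu, hmin⟩ := (isCompact_sphere (0 : ι → ℝ) 1).exists_isMinOn
    (NormedSpace.sphere_nonempty.2 zero_le_one) hcont.continuousOn
  have hu0 : u ≠ 0 := ne_zero_of_mem_unit_sphere ⟨u, hu⟩
  refine ⟨u ⬝ᵥ A *ᵥ u, by simpa using hA.dotProduct_mulVec_pos hu0, fun x => ?_⟩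
  rcases eq_or_ne x 0 with rfl | hx
  · simp
  have hx' : 0 < ‖x‖ := norm_pos_iff.2 hx
  have hmin_x : u ⬝ᵥ A *ᵥ u ≤ (‖x‖⁻¹ • x) ⬝ᵥ A *ᵥ (‖x‖⁻¹ • x) :=
    hmin (show ‖x‖⁻¹ • x ∈ Metric.sphere 0 1 by simp [norm_smul, hx'.ne'])
  simp only [mulVec_smul, smul_dotProduct, dotProduct_smul, smul_eq_mul] at hmin_x
  calc _ ≤ ‖x‖⁻¹ * (‖x‖⁻¹ * (x ⬝ᵥ A *ᵥ x)) * ‖x‖ ^ 2 := by gcongr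
    _ = x ⬝ᵥ A *ᵥ x := by field_simp

lemma Matrix.PosDef.eq_of_mulVec_eq_of_antitoneOn {ι : Type*} [Fintype ι] {A : Matrix ι ι ℝ}
    (hA : A.PosDef) {f : ℝ → ℝ} {s : Set ℝ} (hf : AntitoneOn f s) {t t' : ι → ℝ}
    (ht : ∀ i, t i ∈ s) (ht' : ∀ i, t' i ∈ s) (he : ∀ i, (A *ᵥ t) i = f (t i))
    (he' : ∀ i, (A *ᵥ t') i = f (t' i)) : t = t' := by
  by_contra hne
  have hpos : 0 < (t - t') ⬝ᵥ A *ᵥ (t - t') := by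
    simpa using hA.dotProduct_mulVec_pos (sub_ne_zero.2 hne)
  have hnonpos : (t - t') ⬝ᵥ A *ᵥ (t - t') ≤ 0 := by
    simp only [mulVec_sub, dotProduct, Pi.sub_apply, he, he']
    refine Finset.sum_nonpos fun i _ => ?_
    rcases le_total (t i) (t' i) with h | h
    · exact mul_nonpos_of_nonpos_of_nonneg (sub_nonpos.2 h) (sub_nonneg.2 (hf (ht i) (ht' i) h))
    · exact mul_nonpos_of_nonneg_of_nonpos (sub_nonneg.2 h) (sub_nonpos.2 (hf (ht' i) (ht i) h))
  exact hnonpos.not_gt hpos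

lemma IsMinOn.hasDerivAt_nonpos {f : ℝ → ℝ} {f' a b x : ℝ} (h : IsMinOn f (Icc a b) x)
    (hax : a < x) (hxb : x ≤ b) (hf : HasDerivAt f f' x) : f' ≤ 0 := by
  have hseg : segment ℝ x (x + (a - x)) ⊆ Icc a b := by
    rw [add_sub_cancel, segment_eq_uIcc]
    exact uIcc_subset_Icc ⟨hax.le, hxb⟩ ⟨le_rfl, hax.le.trans hxb⟩
  have := h.localize.hasFDerivWithinAt_nonneg hf.hasFDerivAt.hasFDerivWithinAt
    (mem_posTangentConeAt_of_segment_subset hseg)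
  simp only [ContinuousLinearMap.toSpanSingleton_apply, smul_eq_mul] at this
  exact nonpos_of_mul_nonneg_right this (sub_neg.2 hax)

namespace Zagier

noncomputable def logOneSubExp (s : ℝ) : ℝ := log (1 - exp s)

lemma one_sub_exp_pos {s : ℝ} (hs : s < 0) : 0 < 1 - exp s :=
  sub_pos.2 (exp_lt_one_iff.2 hs)

lemma logOneSubExp_neg {s : ℝ} (hs : s < 0) : logOneSubExp s < 0 :=
  log_neg (one_sub_exp_pos hs) (by linarith [exp_pos s])

lemma strictAntiOn_logOneSubExp : StrictAntiOn logOneSubExp (Iio 0) := by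
  intro a _ b hb hab
  exact log_lt_log (one_sub_exp_pos hb) (by linarith [exp_lt_exp.2 hab])

lemma continuousOn_logOneSubExp : ContinuousOn logOneSubExp (Iio 0) :=
  ContinuousOn.log (by fun_prop) fun _ hs => (one_sub_exp_pos hs).ne'

lemma tendsto_logOneSubExp_nhdsLT_zero : Tendsto logOneSubExp (𝓝[<] 0) atBot := by
  refine tendsto_log_nhdsGT_zero.comp (tendsto_nhdsWithin_of_tendsto_nhds_of_eventually_within _
    ?_ (eventually_nhdsWithin_of_forall fun _ hs => one_sub_exp_pos hs))
  have : Tendsto (fun s => 1 - exp s) (𝓝 0) (𝓝 (1 - exp 0)) :=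
    (continuous_const.sub continuous_exp).tendsto 0
  simpa using this.mono_left nhdsWithin_le_nhds

lemma neg_logOneSubExp_le {s : ℝ} (hs : s ≤ -1) : -logOneSubExp s ≤ 2 * exp s := by
  have hexp : exp s < 1 / 2 := (exp_le_exp.2 hs).trans_lt exp_neg_one_lt_half
  have hpos := one_sub_exp_pos (by linarith : s < 0)
  calc -logOneSubExp s = log (1 - exp s)⁻¹ := by rw [logOneSubExp, log_inv]
    _ ≤ (1 - exp s)⁻¹ - 1 := log_le_sub_one_of_pos (inv_pos.2 hpos)
    _ ≤ 2 * exp s := by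
      rw [inv_eq_one_div, div_sub_one hpos.ne', div_le_iff₀ hpos]
      nlinarith [exp_pos s]

lemma intervalIntegrable_logOneSubExp {a b : ℝ} (ha : a < 0) (hb : b < 0) :
    IntervalIntegrable logOneSubExp MeasureTheory.volume a b :=
  (continuousOn_logOneSubExp.mono fun _ hs => hs.2.trans_lt (max_lt ha hb)).intervalIntegrable

noncomputable def logOneSubExpPrimitive (t : ℝ) : ℝ := ∫ s in (-1)..t, logOneSubExp s

lemma hasDerivAt_logOneSubExpPrimitive {t : ℝ} (ht : t < 0) :
    HasDerivAt logOneSubExpPrimitive (logOneSubExp t) t :=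
  have hcont : ContinuousAt logOneSubExp t := continuousOn_logOneSubExp.continuousAt
    (Iio_mem_nhds ht)
  intervalIntegral.integral_hasDerivAt_right (intervalIntegrable_logOneSubExp (by norm_num) ht)
    (continuousOn_logOneSubExp.stronglyMeasurableAtFilter isOpen_Iio t ht) hcont

lemma logOneSubExpPrimitive_le_one {t : ℝ} (ht : t < 0) : logOneSubExpPrimitive t ≤ 1 := by
  rcases le_or_gt (-1) t with h | h
  · have : 0 ≤ ∫ s in (-1)..t, -logOneSubExp s :=
      intervalIntegral.integral_nonneg h fun s hs =>
        neg_nonneg.2 (logOneSubExp_neg (hs.2.trans_lt ht)).le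
    rw [intervalIntegral.integral_neg] at this
    rw [logOneSubExpPrimitive]
    linarith
  · calc logOneSubExpPrimitive t = ∫ s in t..(-1), -logOneSubExp s := by
          rw [logOneSubExpPrimitive, intervalIntegral.integral_symm, intervalIntegral.integral_neg]
      _ ≤ ∫ s in t..(-1), 2 * exp s :=
          intervalIntegral.integral_mono_on h.le
            (intervalIntegrable_logOneSubExp ht (by norm_num)).neg
            ((continuous_const.mul continuous_exp).intervalIntegrable _ _)
            fun s hs => neg_logOneSubExp_le hs.2
      _ ≤ 1 := by
          rw [intervalIntegral.integral_const_mul, integral_exp]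
          linarith [exp_pos t, exp_neg_one_lt_half]

variable {ι : Type*} [Fintype ι]

lemma hasDerivAt_dotProduct_mulVec_update [DecidableEq ι] (A : Matrix ι ι ℝ) (t : ι → ℝ)
    (i : ι) :
    HasDerivAt (fun s => update t i s ⬝ᵥ A *ᵥ update t i s) ((A *ᵥ t) i + (Aᵀ *ᵥ t) i)
      (t i) := by
  have hu : ∀ j, HasDerivAt (fun s => update t i s j) ((Pi.single i 1 : ι → ℝ) j) (t i) :=
    hasDerivAt_pi.1 (hasDerivAt_update t i (t i))
  have := HasDerivAt.fun_sum fun j (_ : j ∈ Finset.univ) =>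
    (hu j).fun_mul (HasDerivAt.fun_sum fun k (_ : k ∈ Finset.univ) => (hu k).const_mul (A j k))
  refine this.congr_deriv ?_
  simp [Pi.single_apply, mulVec, dotProduct, Finset.mul_sum, Finset.sum_add_distrib, mul_comm]

noncomputable def energy (A : Matrix ι ι ℝ) (t : ι → ℝ) : ℝ :=
  t ⬝ᵥ A *ᵥ t / 2 - ∑ i, logOneSubExpPrimitive (t i)

lemma hasDerivAt_energy_update [DecidableEq ι] {A : Matrix ι ι ℝ} (hA : A.IsSymm)
    {t : ι → ℝ} (ht : ∀ j, t j < 0) (i : ι) :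
    HasDerivAt (fun s => energy A (update t i s)) ((A *ᵥ t) i - logOneSubExp (t i)) (t i) := by
  have hprim := HasDerivAt.fun_sum fun j (_ : j ∈ Finset.univ) =>
    (show HasDerivAt logOneSubExpPrimitive (logOneSubExp (t j)) (update t i (t i) j) by
      simpa using hasDerivAt_logOneSubExpPrimitive (ht j)).comp (t i)
      (hasDerivAt_pi.1 (hasDerivAt_update t i (t i)) j)
  refine ((hasDerivAt_dotProduct_mulVec_update A t i).div_const 2 |>.sub hprim).congr_deriv ?_
  simp [hA.eq, Pi.single_apply]

lemma continuousOn_energy (A : Matrix ι ι ℝ) :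
    ContinuousOn (energy A) (univ.pi fun _ => Iio 0) :=
  have hprim : ContinuousOn logOneSubExpPrimitive (Iio 0) := fun _ ht =>
    (hasDerivAt_logOneSubExpPrimitive ht).continuousAt.continuousWithinAt
  ((by fun_prop : Continuous fun t : ι → ℝ => t ⬝ᵥ A *ᵥ t / 2).continuousOn).sub <|
    continuousOn_finsetSum _ fun i _ =>
      hprim.comp (continuous_apply i).continuousOn fun _ ht => ht i (mem_univ i)

lemma eventually_lt_energy {A : Matrix ι ι ℝ} (hA : A.PosDef) (C : ℝ) :
    ∀ᶠ M in atTop, ∀ t : ι → ℝ, (∀ i, t i < 0) → M ≤ ‖t‖ → C < energy A t := by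
  obtain ⟨c, hc, hq⟩ := hA.exists_pos_mul_sq_norm_le
  have hlim : Tendsto (fun M : ℝ => c * M ^ 2 / 2 - Fintype.card ι) atTop atTop :=
    tendsto_atTop_add_const_right _ _
      (((tendsto_pow_atTop two_ne_zero).const_mul_atTop hc).atTop_div_const two_pos)
  filter_upwards [hlim.eventually_gt_atTop C, eventually_ge_atTop 0] with M hMC hM0 t ht hMt
  have hprim : ∑ i, logOneSubExpPrimitive (t i) ≤ Fintype.card ι := by
    simpa using Finset.sum_le_sum fun i (_ : i ∈ Finset.univ) =>
      logOneSubExpPrimitive_le_one (ht i)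
  calc C < c * M ^ 2 / 2 - Fintype.card ι := hMC
    _ ≤ c * ‖t‖ ^ 2 / 2 - Fintype.card ι := by gcongr
    _ ≤ energy A t := by unfold energy; linarith [hq t]

lemma exists_mulVec_eq_logOneSubExp {A : Matrix ι ι ℝ} (hA : A.PosDef) :
    ∃ t : ι → ℝ, (∀ i, t i < 0) ∧ ∀ i, (A *ᵥ t) i = logOneSubExp (t i) := by
  classical
  have hsymm : A.IsSymm := (conjTranspose_eq_transpose_of_trivial A).symm.trans hA.isHermitian
  set t₀ : ι → ℝ := fun _ => -1
  obtain ⟨M, hM, hM1⟩ :=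
    ((eventually_lt_energy hA (energy A t₀)).and (eventually_ge_atTop 1)).exists
  -- `B` bounds `A t` on `[-M, 0]ʳ`, which contains every box `[-M, b]ʳ`, so `b` may depend on it.
  obtain ⟨B, hB⟩ := (isCompact_univ_pi fun _ : ι => isCompact_Icc (a := -M) (b := 0))
    |>.exists_bound_of_continuousOn (f := (A *ᵥ ·)) (by fun_prop)
  obtain ⟨b, hbB, hb⟩ := ((tendsto_logOneSubExp_nhdsLT_zero.eventually_lt_atBot (-B)).and
    (Ioo_mem_nhdsLT (by norm_num : (-1 : ℝ) < 0))).exists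
  set K := univ.pi fun _ : ι => Icc (-M) b
  have hK : ∀ t ∈ K, ∀ i, t i < 0 := fun t ht i => (ht i (mem_univ i)).2.trans_lt hb.2
  have ht₀ : t₀ ∈ K := fun _ _ => ⟨by linarith, hb.1.le⟩
  obtain ⟨t, htK, hmin⟩ := (isCompact_univ_pi fun _ => isCompact_Icc).exists_isMinOn
    ⟨t₀, ht₀⟩ ((continuousOn_energy A).mono fun t ht i _ => hK t ht i)
  refine ⟨t, hK t htK, fun i => ?_⟩
  have hmin_i : IsMinOn (fun s => energy A (update t i s)) (Icc (-M) b) (t i) :=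
    hmin.comp_mapsTo (fun _ hs => (update_mem_pi_iff_of_mem htK).2 fun _ => hs)
      (update_eq_self i t)
  have hderiv := hasDerivAt_energy_update hsymm (hK t htK) i
  have hlo : -M < t i := by
    refine (htK i (mem_univ i)).1.lt_of_ne fun h => ?_
    have hMt : M ≤ ‖t‖ := (le_abs_self M).trans (by simpa [← h] using norm_le_pi_norm t i)
    exact (hM t (hK t htK) hMt).not_ge (hmin ht₀)
  have hhi : t i < b := by
    refine (htK i (mem_univ i)).2.lt_of_ne fun h => ?_
    have hAt : |(A *ᵥ t) i| ≤ B := (norm_le_pi_norm (A *ᵥ t) i).trans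
      (hB t fun j _ => ⟨(htK j (mem_univ j)).1, (hK t htK j).le⟩)
    have := hmin_i.hasDerivAt_nonpos hlo (htK i (mem_univ i)).2 hderiv
    rw [h] at this
    linarith [neg_abs_le ((A *ᵥ t) i)]
  exact sub_eq_zero.1 ((hmin_i.isLocalMin (Icc_mem_nhds hlo hhi)).hasDerivAt_eq_zero hderiv)

lemma prod_rpow_eq_one_sub_iff {A : Matrix ι ι ℝ} {x : ι → ℝ} (hx : ∀ j, x j ∈ Ioo 0 1)
    (i : ι) :
    ∏ j, x j ^ A i j = 1 - x i ↔ (A *ᵥ fun j => log (x j)) i = logOneSubExp (log (x i)) := by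
  have hprod : log (∏ j, x j ^ A i j) = (A *ᵥ fun j => log (x j)) i := by
    rw [log_prod fun j _ => (rpow_pos_of_pos (hx j).1 _).ne']
    simp [mulVec, dotProduct, log_rpow (hx _).1]
  rw [logOneSubExp, exp_log (hx i).1, ← hprod]
  exact (log_injOn_pos.eq_iff (Finset.prod_pos fun j _ => rpow_pos_of_pos (hx j).1 _)
    (sub_pos.2 (hx i).2)).symm

end Zagier

open Zagier in
theorem zagier_unique_solution_general (r : ℕ)
    (A : Matrix (Fin r) (Fin r) ℝ) (hA : A.PosDef) :
    ∃! x : Fin r → ℝ, (∀ i, x i ∈ Set.Ioo (0 : ℝ) 1) ∧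
      ∀ i, ∏ j, (x j) ^ (A i j) = 1 - x i := by
  obtain ⟨t, ht, hsol⟩ := exists_mulVec_eq_logOneSubExp hA
  have hx : ∀ i, exp (t i) ∈ Ioo 0 1 := fun i => ⟨exp_pos _, exp_lt_one_iff.2 (ht i)⟩
  refine ⟨fun i => exp (t i), ⟨hx, fun i => ?_⟩, fun y ⟨hy, hysol⟩ => ?_⟩
  · simpa [prod_rpow_eq_one_sub_iff hx] using hsol i
  · have hlog : (fun i => log (y i)) = t :=
      hA.eq_of_mulVec_eq_of_antitoneOn strictAntiOn_logOneSubExp.antitoneOn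
        (fun i => log_neg (hy i).1 (hy i).2) ht
        (fun i => (prod_rpow_eq_one_sub_iff hy i).1 (hysol i)) hsol
    funext i
    rw [← hlog, exp_log (hy i).1]

/-- Zagier's uniqueness theorem: for a symmetric positive definite matrix `A`,
the system `∏_j x_j^{A_{ij}} = 1 - x_i` has exactly one solution in `(0,1)^r`. -/
theorem zagier_unique_solution (r : ℕ) (hr : 1 ≤ r)
    (A : Matrix (Fin r) (Fin r) ℝ) (hA : A.PosDef) (hAsymm : A.IsSymm) :
    ∃! x : Fin r → ℝ, (∀ i, x i ∈ Set.Ioo (0 : ℝ) 1) ∧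
      ∀ i, ∏ j, (x j) ^ (A i j) = 1 - x i :=
  zagier_unique_solution_general r A hA
end

section
/- Let $r \geq 1$, let $g = \mathrm{diag}(g_1, \ldots, g_{r+1})$ with distinct nonzero $g_i$ satisfying $\prod_i g_i = 1$, and let $z_{i,m}$ denote the Schur polynomial $s_{(m^i)}(g_1, \ldots, g_{r+1})$ associated to the rectangular partition with $i$ rows of length $m$ (for $1 \leq i \leq r$, $m \geq 0$). Then for all $1 \leq i \leq r$ and $m \geq 1$, $z_{i,m+1}\, z_{i,m-1} = z_{i,m}^2 - z_{i-1,m}\, z_{i+1,m}$, where $z_{0,m} = 1$ and $z_{r+1,m} = \prod_i g_i^m = 1$. -/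
/-!
Each `z i m` is a ratio of alternants `det (g_k ^ e_j)` over the common Vandermonde determinant,
and the identity is homogeneous of degree two in that denominator, so it is an identity between
alternants. Those occurring in it share `r - 1` rows, and the identity is the three-term Plücker
relation between determinants that differ only in two rows, a consequence of Cramer's rule.
Putting the rows back in decreasing order of exponents costs the sign of a cycle, and the minors
lacking the exponent `0` are rectangular alternants with all exponents shifted by one, which
changes nothing because `∏ g_k = 1`.
-/

open Matrix Function Equiv

theorem Fin.val_cycleIcc {n : ℕ} [NeZero n] {p q : Fin n} (hpq : p ≤ q) (k : Fin n) :
    (cycleIcc p q k : ℕ) =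
      if k < p ∨ q < k then (k : ℕ) else if k = q then (p : ℕ) else k + 1 := by
  rcases lt_or_ge k p with hkp | hpk
  · simp [cycleIcc_of_lt hkp, hkp]
  rcases lt_or_ge q k with hqk | hkq
  · simp [cycleIcc_of_gt hqk, hqk]
  rw [if_neg (by simp [hpk, hkq])]
  rcases hkq.lt_or_eq with hkq | rfl
  · rw [cycleIcc_of_ge_of_lt hpk hkq, if_neg hkq.ne, val_add_one_of_lt' (by omega)]
  · rw [cycleIcc_of_last hpq, if_pos rfl]

namespace Matrix

variable {R ι : Type*} [CommRing R] [Fintype ι] [DecidableEq ι]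

theorem det_smul_eq_sum_det_updateRow_smul (A : Matrix ι ι R) (v : ι → R) :
    A.det • v = ∑ j, (A.updateRow j v).det • A j := by
  have h := mulVec_cramer Aᵀ v
  simp only [det_transpose, mulVec_transpose, vecMul_eq_sum, cramer_transpose_apply] at h
  exact h.symm

theorem det_updateRow_updateRow_pluecker (M : Matrix ι ι R) {s t : ι} (hst : s ≠ t)
    (a b c d : ι → R) :
    ((M.updateRow s c).updateRow t d).det * ((M.updateRow s b).updateRow t a).det =
      ((M.updateRow s a).updateRow t d).det * ((M.updateRow s b).updateRow t c).det +
        ((M.updateRow s c).updateRow t a).det * ((M.updateRow s b).updateRow t d).det := by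
  let A := (M.updateRow s c).updateRow t d
  let L := detRowAlternating.toMultilinearMap.toLinearMap (M.updateRow s b) t
  have hL : ∀ v, L v = ((M.updateRow s b).updateRow t v).det := fun _ => rfl
  have hA_ne : ∀ j, j ≠ s ∧ j ≠ t → L (A j) = 0 := fun j hj => by
    rw [hL, show A j = M.updateRow s b j by simp [A, updateRow_ne hj.1, updateRow_ne hj.2]]
    exact det_updateRow_eq_zero hj.2
  have hAs : A s = c := by simp [A, updateRow_ne hst]
  have hAt : A t = d := updateRow_self
  have hA_updateRow_s : A.updateRow s a = (M.updateRow s a).updateRow t d := by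
    rw [updateRow_comm _ hst.symm, updateRow_idem]
  -- Cramer's rule expands `det A • a` in the rows of `A`, and `L` kills all of them but `c`, `d`.
  calc A.det * L a = L (A.det • a) := by rw [map_smul, smul_eq_mul]
    _ = ∑ j, (A.updateRow j a).det * L (A j) := by
      simp [det_smul_eq_sum_det_updateRow_smul A a, map_sum]
    _ = _ := by
      rw [Fintype.sum_eq_add s t hst fun j hj => by rw [hA_ne j hj, mul_zero],
        hA_updateRow_s, hAs, hAt, hL, hL, updateRow_idem]

end Matrix

section Alternant

variable {R ι : Type*} [CommRing R] [DecidableEq ι]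

def alternantMatrix (x : ι → R) (e : ι → ℕ) : Matrix ι ι R := of fun j k => x k ^ e j

theorem alternantMatrix_update (x : ι → R) (e : ι → ℕ) (s : ι) (c : ℕ) :
    alternantMatrix x (update e s c) = (alternantMatrix x e).updateRow s (x · ^ c) := by
  ext j k
  by_cases h : j = s
  · subst h; simp [alternantMatrix]
  · simp [alternantMatrix, h]

variable [Fintype ι]

def alternant (x : ι → R) (e : ι → ℕ) : R := (alternantMatrix x e).det

theorem alternant_pluecker (x : ι → R) (e : ι → ℕ) {s t : ι} (hst : s ≠ t)
    (a b c d : ℕ) :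
    alternant x (update (update e s c) t d) * alternant x (update (update e s b) t a) =
      alternant x (update (update e s a) t d) * alternant x (update (update e s b) t c) +
        alternant x (update (update e s c) t a) * alternant x (update (update e s b) t d) := by
  simp only [alternant, alternantMatrix_update]
  exact det_updateRow_updateRow_pluecker _ hst _ _ _ _

theorem alternant_add_one (x : ι → R) (e : ι → ℕ) :
    alternant x (e + 1) = (∏ k, x k) * alternant x e := by
  rw [alternant, alternant, ← det_mul_row]
  congr 1
  ext j k
  simp [alternantMatrix, pow_succ, mul_comm]

theorem alternant_comp_perm (x : ι → R) (e : ι → ℕ) (σ : Perm ι) :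
    alternant x (e ∘ σ) = Perm.sign σ * alternant x e :=
  det_permute σ (alternantMatrix x e)

theorem alternant_comp_cycleIcc {n : ℕ} [NeZero n] (x : Fin n → R) (e : Fin n → ℕ)
    {p q : Fin n} (hpq : p ≤ q) :
    alternant x (e ∘ Fin.cycleIcc p q) = (-1) ^ (q - p : ℕ) * alternant x e := by
  rw [alternant_comp_perm, Fin.sign_cycleIcc_of_le hpq]
  push_cast
  rfl

end Alternant

-- The exponents `λ_j + (r - j)` of the rectangular partition `λ = (m^i)` in `r + 1` variables.
def rectExponent (r i m : ℕ) (j : Fin (r + 1)) : ℕ := (if (j : ℕ) < i then m else 0) + (r - j)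

section Hirota

variable {R : Type*} [CommRing R] {r : ℕ} {x : Fin (r + 1) → R} {i : ℕ}

/-- The Plücker relation for the `r - 1` common rows with exponents `m + r + 1, …, m + r - i + 3`
and `r - i, …, 1`, completed by two of `m + r + 2 > m + r - i + 2 > r - i + 1 > 0`. -/
theorem alternant_rectExponent_pluecker (hx : ∏ k, x k = 1) (hi : 1 ≤ i) (hir : i ≤ r)
    (m : ℕ) :
    alternant x (rectExponent r (i - 1) (m + 1)) *
        ((-1) ^ r * alternant x (rectExponent r (i + 1) (m + 1))) =
      (-1) ^ (i - 1) * alternant x (rectExponent r i (m + 2)) *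
          ((-1) ^ (r - i) * alternant x (rectExponent r i m)) +
        (-1) ^ r * alternant x (rectExponent r i (m + 1)) *
          alternant x (rectExponent r i (m + 1)) := by
  set e := rectExponent r i (m + 1)
  set s : Fin (r + 1) := ⟨i - 1, by omega⟩
  set u : Fin (r + 1) := ⟨i, by omega⟩
  have hs : (s : ℕ) = i - 1 := rfl
  have hu : (u : ℕ) = i := rfl
  have hst : s ≠ Fin.last r := by rw [Ne, Fin.ext_iff, hs, Fin.val_last]; omega
  have het : e (Fin.last r) = 0 := by
    simp only [e, rectExponent, Fin.val_last, if_neg (not_lt.2 hir), Nat.sub_self]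
  have h_cd : update (update e s (r - i + 1)) (Fin.last r) 0 =
      rectExponent r (i - 1) (m + 1) := by
    funext j
    simp only [update_apply, Fin.ext_iff, Fin.val_last, hs, e, rectExponent]
    split_ifs <;> omega
  have h_ad : update (update e s (m + r + 2)) (Fin.last r) 0 =
      rectExponent r i (m + 2) ∘ Fin.cycleIcc 0 s := by
    funext j
    simp only [Function.comp_apply, update_apply, Fin.ext_iff, Fin.val_last, hs, e,
      rectExponent, Fin.val_cycleIcc (Fin.zero_le s), Fin.lt_def, Fin.val_zero]
    split_ifs <;> omega
  have h_ca : update (update e s (r - i + 1)) (Fin.last r) (m + r + 2) =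
      (e + 1) ∘ Fin.cycleIcc 0 (Fin.last r) := by
    funext j
    simp only [Function.comp_apply, update_apply, Fin.ext_iff, Fin.val_last, hs, e,
      rectExponent, Fin.val_cycleIcc (Fin.zero_le _), Fin.lt_def, Fin.val_zero, Pi.add_apply,
      Pi.one_apply]
    split_ifs <;> omega
  have h_ba : update e (Fin.last r) (m + r + 2) =
      (rectExponent r (i + 1) (m + 1) + 1) ∘ Fin.cycleIcc 0 (Fin.last r) := by
    funext j
    simp only [Function.comp_apply, update_apply, Fin.ext_iff, Fin.val_last, e, rectExponent,
      Fin.val_cycleIcc (Fin.zero_le _), Fin.lt_def, Fin.val_zero, Pi.add_apply, Pi.one_apply]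
    split_ifs <;> omega
  have h_bc : update e (Fin.last r) (r - i + 1) =
      (rectExponent r i m + 1) ∘ Fin.cycleIcc u (Fin.last r) := by
    funext j
    simp only [Function.comp_apply, update_apply, Fin.ext_iff, Fin.val_last, hu, e,
      rectExponent, Fin.val_cycleIcc (Fin.le_last u), Fin.lt_def, Pi.add_apply, Pi.one_apply]
    split_ifs <;> omega
  have P := alternant_pluecker x e hst (m + r + 2) (e s) (r - i + 1) (e (Fin.last r))
  simp only [update_eq_self] at P
  rw [het] at P
  simpa only [h_cd, h_ad, h_ca, h_ba, h_bc, alternant_comp_cycleIcc _ _ (Fin.zero_le _),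
    alternant_comp_cycleIcc _ _ (Fin.le_last _), alternant_add_one, hx, one_mul, hs, hu,
    Fin.val_last, Fin.val_zero, tsub_zero] using P

theorem alternant_rectExponent_hirota (hx : ∏ k, x k = 1) (hi : 1 ≤ i) (hir : i ≤ r)
    (m : ℕ) :
    alternant x (rectExponent r i (m + 2)) * alternant x (rectExponent r i m) =
      alternant x (rectExponent r i (m + 1)) ^ 2 -
        alternant x (rectExponent r (i - 1) (m + 1)) *
          alternant x (rectExponent r (i + 1) (m + 1)) := by
  have hodd : (-1 : R) ^ (i - 1) * (-1) ^ (r - i) * (-1) ^ r = -1 := by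
    rw [← pow_add, ← pow_add]
    exact Odd.neg_one_pow ⟨r - 1, by omega⟩
  have heven : (-1 : R) ^ r * (-1) ^ r = 1 := by
    rw [← pow_add]
    exact Even.neg_one_pow ⟨r, rfl⟩
  linear_combination (-1) ^ r * alternant_rectExponent_pluecker hx hi hir m +
    alternant x (rectExponent r i (m + 2)) * alternant x (rectExponent r i m) * hodd -
    (alternant x (rectExponent r (i - 1) (m + 1)) *
        alternant x (rectExponent r (i + 1) (m + 1)) -
      alternant x (rectExponent r i (m + 1)) ^ 2) * heven

end Hirota

theorem rectangular_schur_hirota_general (r : ℕ)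
    (g : Fin (r + 1) → ℂ)
    (hgprod : ∏ i, g i = 1) :
    let z : ℕ → ℕ → ℂ := fun i m =>
      Matrix.det (Matrix.of fun j k : Fin (r + 1) =>
          g k ^ ((if (j : ℕ) < i then m else 0) + (r - (j : ℕ)))) /
        Matrix.det (Matrix.of fun j k : Fin (r + 1) => g k ^ (r - (j : ℕ)))
    ∀ i : ℕ, 1 ≤ i → i ≤ r → ∀ m : ℕ, 1 ≤ m →
      z i (m + 1) * z i (m - 1) = z i m ^ 2 - z (i - 1) m * z (i + 1) m := by
  intro z i hi hir m hm
  obtain ⟨m, rfl⟩ : ∃ m', m = m' + 1 := ⟨m - 1, by omega⟩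
  set V := Matrix.det (Matrix.of fun j k : Fin (r + 1) => g k ^ (r - (j : ℕ)))
  have hz : ∀ a b, z a b = alternant g (rectExponent r a b) * V⁻¹ := fun _ _ =>
    div_eq_mul_inv _ _
  simp only [hz, Nat.add_sub_cancel]
  linear_combination V⁻¹ ^ 2 * alternant_rectExponent_hirota hgprod hi hir m

/-- The rectangular Schur polynomials `z_{i,m} = s_{(m^i)}(g₁, …, g_{r+1})`
(expressed via the bialternant formula for distinct `gᵢ` with `∏ gᵢ = 1`) satisfy
the discrete Hirota (Q-system) relations of type `A_r`. Note `z_{0,m} = 1` and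
`z_{r+1,m} = (∏ gᵢ)^m = 1` are automatic from the bialternant formula. -/
theorem rectangular_schur_hirota (r : ℕ) (hr : 1 ≤ r)
    (g : Fin (r + 1) → ℂ) (hg0 : ∀ i, g i ≠ 0) (hgdist : Function.Injective g)
    (hgprod : ∏ i, g i = 1) :
    let z : ℕ → ℕ → ℂ := fun i m =>
      Matrix.det (Matrix.of fun j k : Fin (r + 1) =>
          g k ^ ((if (j : ℕ) < i then m else 0) + (r - (j : ℕ)))) /
        Matrix.det (Matrix.of fun j k : Fin (r + 1) => g k ^ (r - (j : ℕ)))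
    ∀ i : ℕ, 1 ≤ i → i ≤ r → ∀ m : ℕ, 1 ≤ m →
      z i (m + 1) * z i (m - 1) = z i m ^ 2 - z (i - 1) m * z (i + 1) m :=
  rectangular_schur_hirota_general r g hgprod
end

section
/- Let $r \geq 1$, let $A$ be a real symmetric positive definite $r \times r$ matrix, and define $\phi : (0,1)^r \to \mathbb{R}^r$ by $\phi_i(x) = \sum_j A_{ij} \log x_j - \log(1-x_i)$. Then $\phi$ is a proper map: the preimage under $\phi$ of any compact subset of $\mathbb{R}^r$ is compact in $(0,1)^r$. -/
/-!
With `u = log ∘ x` we have `A u = φ(x) + log ∘ (1 - x)`, hence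
`uᵀ A u = ⟨u, φ(x)⟩ + ∑ᵢ log xᵢ log (1 - xᵢ) ≤ r ‖u‖ ‖φ(x)‖ + 2 r`.
Positive definiteness bounds the left side below by `c ‖u‖²`, so `‖log ∘ x‖` is bounded while
`φ(x)` stays in a compact set, and then so is `log ∘ (1 - x) = A u - φ(x)`. The preimage of a
compact set therefore lies in a box `[ε, 1 - ε]ʳ`, on which `φ` is continuous, and is closed there.
-/

open Real Finset Matrix

theorem Real.log_mul_log_one_sub_le_two_of_le_half {x : ℝ} (hx₀ : 0 < x) (hx : x ≤ 1 / 2) :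
    log x * log (1 - x) ≤ 2 := by
  have hx₁ : 0 < 1 - x := by linarith
  -- `-log y ≤ 1/y - 1` bounds the factors by `1/x` and `x/(1-x)`, with product `1/(1-x) ≤ 2`.
  have h₁ : -log x ≤ x⁻¹ := by linarith [one_sub_inv_le_log_of_pos hx₀]
  have h₂ : -log (1 - x) ≤ (1 - x)⁻¹ - 1 := by linarith [one_sub_inv_le_log_of_pos hx₁]
  have h₂₀ : 0 ≤ -log (1 - x) := by linarith [log_nonpos hx₁.le (by linarith)]
  calc log x * log (1 - x) = -log x * -log (1 - x) := by ring
    _ ≤ x⁻¹ * ((1 - x)⁻¹ - 1) := by gcongr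
    _ = (1 - x)⁻¹ := by field_simp; ring
    _ ≤ 2 := by rw [inv_le_comm₀ hx₁ two_pos]; linarith

theorem Real.log_mul_log_one_sub_le_two {x : ℝ} (hx₀ : 0 < x) (hx₁ : x < 1) :
    log x * log (1 - x) ≤ 2 := by
  rcases le_or_gt x (1 / 2) with hx | hx
  · exact log_mul_log_one_sub_le_two_of_le_half hx₀ hx
  · simpa [mul_comm] using
      log_mul_log_one_sub_le_two_of_le_half (x := 1 - x) (by linarith) (by linarith)

theorem le_max_one_div_of_mul_sq_le {a b c t : ℝ} (hb : 0 ≤ b) (hc : 0 < c)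
    (h : c * t ^ 2 ≤ a * t + b) : t ≤ max 1 ((a + b) / c) := by
  rcases le_or_gt t 1 with ht | ht
  · exact ht.trans (le_max_left _ _)
  · refine le_max_of_le_right ((le_div_iff₀ hc).2 ?_)
    nlinarith

section

variable {ι : Type*} [Fintype ι]

theorem dotProduct_le_card_mul_norm_mul_norm (u v : ι → ℝ) :
    u ⬝ᵥ v ≤ Fintype.card ι * (‖u‖ * ‖v‖) := by
  rw [← nsmul_eq_mul, dotProduct, ← Finset.card_univ]
  refine sum_le_card_nsmul _ _ _ fun i _ => (le_abs_self _).trans ?_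
  rw [abs_mul, ← Real.norm_eq_abs, ← Real.norm_eq_abs]
  exact mul_le_mul (norm_le_pi_norm u i) (norm_le_pi_norm v i) (norm_nonneg _) (norm_nonneg _)

theorem Matrix.PosDef.exists_pos_mul_norm_sq_le {A : Matrix ι ι ℝ} (hA : A.PosDef) :
    ∃ c > 0, ∀ u : ι → ℝ, c * ‖u‖ ^ 2 ≤ u ⬝ᵥ (A *ᵥ u) := by
  have hQ : Continuous fun u : ι → ℝ => u ⬝ᵥ (A *ᵥ u) := by fun_prop
  obtain ⟨c, hc, hcQ⟩ := (isCompact_sphere (0 : ι → ℝ) 1).exists_forall_le' hQ.continuousOn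
    fun u hu => by
      simpa using hA.dotProduct_mulVec_pos (ne_zero_of_mem_unit_sphere (x := ⟨u, hu⟩))
  refine ⟨c, hc, fun u => ?_⟩
  rcases eq_or_ne u 0 with rfl | hu
  · simp
  -- Homogeneity: rescale `u` to the unit sphere.
  have hnorm : ‖u‖ ≠ 0 := norm_ne_zero_iff.2 hu
  have hv := hcQ (‖u‖⁻¹ • u) (by simp [norm_smul, hnorm])
  rw [mulVec_smul, dotProduct_smul, smul_dotProduct, smul_eq_mul, smul_eq_mul] at hv
  calc c * ‖u‖ ^ 2 ≤ ‖u‖⁻¹ * (‖u‖⁻¹ * (u ⬝ᵥ (A *ᵥ u))) * ‖u‖ ^ 2 := by gcongr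
    _ = u ⬝ᵥ (A *ᵥ u) := by field_simp

noncomputable def zagierMap (A : Matrix ι ι ℝ) (x : ι → ℝ) : ι → ℝ :=
  A *ᵥ (log ∘ x) - log ∘ (1 - x)

variable {A : Matrix ι ι ℝ}

theorem continuousOn_zagierMap :
    ContinuousOn (zagierMap A) {x | ∀ i, x i ∈ Set.Ioo (0 : ℝ) 1} := by
  have hlog : ContinuousOn (fun x : ι → ℝ => log ∘ x) {x | ∀ i, x i ∈ Set.Ioo (0 : ℝ) 1} :=
    continuousOn_pi.2 fun i => (continuousOn_apply i _).log fun x hx => (hx i).1.ne'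
  have hlog₁ : ContinuousOn (fun x : ι → ℝ => log ∘ (1 - x)) {x | ∀ i, x i ∈ Set.Ioo (0 : ℝ) 1} :=
    continuousOn_pi.2 fun i =>
      (continuousOn_const.sub (continuousOn_apply i _)).log fun x hx => (sub_pos.2 (hx i).2).ne'
  exact ((Continuous.matrix_mulVec continuous_const continuous_id).comp_continuousOn hlog).sub hlog₁

theorem Matrix.PosDef.exists_norm_log_le_of_norm_zagierMap_le (hA : A.PosDef) (M : ℝ) :
    ∃ B, ∀ x : ι → ℝ, (∀ i, x i ∈ Set.Ioo (0 : ℝ) 1) → ‖zagierMap A x‖ ≤ M →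
      ‖log ∘ x‖ ≤ B := by
  obtain ⟨c, hc, hcoer⟩ := hA.exists_pos_mul_norm_sq_le
  set n : ℝ := (Fintype.card ι : ℝ)
  refine ⟨max 1 ((n * M + n * 2) / c), fun x hx hM =>
    le_max_one_div_of_mul_sq_le (by positivity) hc ?_⟩
  have hcross : (log ∘ x) ⬝ᵥ (log ∘ (1 - x)) ≤ n * 2 := by
    rw [← nsmul_eq_mul, dotProduct, ← Finset.card_univ]
    exact sum_le_card_nsmul _ _ _ fun i _ => log_mul_log_one_sub_le_two (hx i).1 (hx i).2
  have hφ : (log ∘ x) ⬝ᵥ zagierMap A x ≤ n * M * ‖log ∘ x‖ := by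
    calc _ ≤ n * (‖log ∘ x‖ * ‖zagierMap A x‖) := dotProduct_le_card_mul_norm_mul_norm _ _
      _ ≤ n * (‖log ∘ x‖ * M) := by gcongr
      _ = _ := by ring
  calc c * ‖log ∘ x‖ ^ 2 ≤ (log ∘ x) ⬝ᵥ (A *ᵥ (log ∘ x)) := hcoer _
    _ = (log ∘ x) ⬝ᵥ zagierMap A x + (log ∘ x) ⬝ᵥ (log ∘ (1 - x)) := by
      rw [← dotProduct_add, zagierMap, sub_add_cancel]
    _ ≤ n * M * ‖log ∘ x‖ + n * 2 := add_le_add hφ hcross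

theorem exp_neg_le_of_norm_log_le {y : ι → ℝ} {B : ℝ} (hy : ∀ i, 0 < y i) (hB : ‖log ∘ y‖ ≤ B)
    (i : ι) : exp (-B) ≤ y i := by
  rw [← le_log_iff_exp_le (hy i), neg_le]
  exact (neg_le_abs _).trans ((norm_le_pi_norm (log ∘ y) i).trans hB)

section

attribute [local instance] Matrix.linftyOpNormedAddCommGroup

theorem norm_log_comp_one_sub_le (x : ι → ℝ) :
    ‖log ∘ (1 - x)‖ ≤ ‖A‖ * ‖log ∘ x‖ + ‖zagierMap A x‖ := by
  calc ‖log ∘ (1 - x)‖ = ‖A *ᵥ (log ∘ x) - zagierMap A x‖ := by rw [zagierMap, sub_sub_cancel]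
    _ ≤ ‖A *ᵥ (log ∘ x)‖ + ‖zagierMap A x‖ := norm_sub_le _ _
    _ ≤ ‖A‖ * ‖log ∘ x‖ + ‖zagierMap A x‖ := by gcongr; exact linfty_opNorm_mulVec _ _

theorem Matrix.PosDef.exists_pos_forall_mem_Icc_of_norm_zagierMap_le (hA : A.PosDef) (M : ℝ) :
    ∃ ε > 0, ∀ x : ι → ℝ, (∀ i, x i ∈ Set.Ioo (0 : ℝ) 1) → ‖zagierMap A x‖ ≤ M →
      ∀ i, x i ∈ Set.Icc ε (1 - ε) := by
  obtain ⟨B, hB⟩ := hA.exists_norm_log_le_of_norm_zagierMap_le M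
  set B' := max B (‖A‖ * B + M)
  refine ⟨exp (-B'), exp_pos _, fun x hx hM i => ⟨?_, ?_⟩⟩
  · exact exp_neg_le_of_norm_log_le (fun i => (hx i).1) ((hB x hx hM).trans (le_max_left _ _)) i
  · have hB₁ : ‖log ∘ (1 - x)‖ ≤ B' := calc
      _ ≤ ‖A‖ * ‖log ∘ x‖ + ‖zagierMap A x‖ := norm_log_comp_one_sub_le x
      _ ≤ ‖A‖ * B + M := by gcongr; exact hB x hx hM
      _ ≤ B' := le_max_right _ _
    have : exp (-B') ≤ 1 - x i := exp_neg_le_of_norm_log_le (fun i => sub_pos.2 (hx i).2) hB₁ i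
    linarith

end

end

theorem zagier_map_proper_general (r : ℕ)
    (A : Matrix (Fin r) (Fin r) ℝ) (hA : A.PosDef) :
    let φ : (Fin r → ℝ) → (Fin r → ℝ) := fun x i =>
      ∑ j, A i j * Real.log (x j) - Real.log (1 - x i)
    ∀ K : Set (Fin r → ℝ), IsCompact K →
      IsCompact {x : Fin r → ℝ | (∀ i, x i ∈ Set.Ioo (0 : ℝ) 1) ∧ φ x ∈ K} := by
  intro _ K hK
  change IsCompact {x | (∀ i, x i ∈ Set.Ioo (0 : ℝ) 1) ∧ zagierMap A x ∈ K}
  obtain ⟨M, hM⟩ := hK.isBounded.exists_norm_le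
  obtain ⟨ε, hε, hx⟩ := hA.exists_pos_forall_mem_Icc_of_norm_zagierMap_le M
  set box : Set (Fin r → ℝ) := Set.univ.pi fun _ => Set.Icc ε (1 - ε)
  have hbox : box ⊆ {x | ∀ i, x i ∈ Set.Ioo (0 : ℝ) 1} := fun x hxbox i => by
    have := hxbox i (Set.mem_univ i)
    exact ⟨hε.trans_le this.1, by linarith [this.2]⟩
  have hS : {x | (∀ i, x i ∈ Set.Ioo (0 : ℝ) 1) ∧ zagierMap A x ∈ K} = box ∩ zagierMap A ⁻¹' K :=
    Set.Subset.antisymm (fun x ⟨hx₀, hxK⟩ => ⟨fun i _ => hx x hx₀ (hM _ hxK) i, hxK⟩)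
      fun x ⟨hxbox, hxK⟩ => ⟨hbox hxbox, hxK⟩
  rw [hS]
  exact (isCompact_univ_pi fun _ => isCompact_Icc).of_isClosed_subset
    ((continuousOn_zagierMap.mono hbox).preimage_isClosed_of_isClosed
      (isClosed_set_pi fun _ _ => isClosed_Icc) hK.isClosed) Set.inter_subset_left

/-- Properness of Zagier's map `φ : (0,1)^r → ℝ^r`,
`φ_i(x) = ∑_j A_{ij} log x_j - log(1-x_i)`: the preimage of any compact set is
compact. -/
theorem zagier_map_proper (r : ℕ) (hr : 1 ≤ r)
    (A : Matrix (Fin r) (Fin r) ℝ) (hA : A.PosDef) (hAsymm : A.IsSymm) :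
    let φ : (Fin r → ℝ) → (Fin r → ℝ) := fun x i =>
      ∑ j, A i j * Real.log (x j) - Real.log (1 - x i)
    ∀ K : Set (Fin r → ℝ), IsCompact K →
      IsCompact {x : Fin r → ℝ | (∀ i, x i ∈ Set.Ioo (0 : ℝ) 1) ∧ φ x ∈ K} :=
  zagier_map_proper_general r A hA
end
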